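/- arXiv:2012.03133 — 5 statements merged into one kernel-verified Lean document; each statement's English description precedes it below -/
import Mathlib

section
/- (Transformation to canonical form) Let B(y) define a Poisson bracket on an open neighbourhood U of y₀ ∈ ℝⁿ with constant rank 2d = n − q, let θ(y) = (P_i(y), Q_i(y), C_k(y)) be a local diffeomorphism onto its image whose components satisfy the Darboux bracket relations {P_i,P_j}_B = 0, {P_i,Q_j}_B = −δ_ij, {Q_i,Q_j}_B = 0, and {·, C_l}_B = 0 for all components. Let H : U → ℝ be smooth and define K = H ∘ θ⁻¹. If y(t) ∈ U solves the Poisson system ẏ = B(y)∇H(y), then z(t) = θ(y(t)) solves ż = B₀∇K(z), where B₀ is the constant n×n block matrix with J⁻¹ (J the canonical 2d×2d symplectic matrix) in the upper-left 2d×2d block and zeros elsewhere; equivalently, writing z = (p, q, c) with p, q ∈ ℝ^d and c ∈ ℝ^q, one has ṗ = −K_q(p,q,c), q̇ = K_p(p,q,c), ċ = 0. -/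
/-- Partial derivative of `F` at `y` in the `i`-th coordinate direction. -/
noncomputable def pd {n : ℕ} (F : (Fin n → ℝ) → ℝ) (y : Fin n → ℝ) (i : Fin n) : ℝ :=
  fderiv ℝ F y (Pi.single i 1)

/-- The gradient of `F` at `y`. -/
noncomputable def grad {n : ℕ} (F : (Fin n → ℝ) → ℝ) (y : Fin n → ℝ) : Fin n → ℝ :=
  fun i => pd F y i

/-- The bracket `{F,G}_B(y) = ∇F(y)ᵀ B(y) ∇G(y)`. -/
noncomputable def bracket {n : ℕ} (B : (Fin n → ℝ) → Matrix (Fin n) (Fin n) ℝ)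
    (F G : (Fin n → ℝ) → ℝ) (y : Fin n → ℝ) : ℝ :=
  ∑ i, ∑ j, pd F y i * B y i j * pd G y j

/-- The constant structure matrix `B₀ = ((J⁻¹, 0), (0, 0))` on `ℝ^{2d+q}`, where `J` is the
canonical `2d × 2d` symplectic matrix `((0, I_d), (-I_d, 0))`, so `J⁻¹ = ((0, -I_d), (I_d, 0))`. -/
def B0mat (d q : ℕ) : Matrix (Fin (2*d+q)) (Fin (2*d+q)) ℝ := fun i j =>
  if (i:ℕ) < d ∧ (j:ℕ) = (i:ℕ) + d then -1
  else if (j:ℕ) < d ∧ (i:ℕ) = (j:ℕ) + d then 1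
  else 0


lemma clm_apply_eq_sum {n : ℕ} (f : (Fin n → ℝ) →L[ℝ] ℝ) (v : Fin n → ℝ) :
    f v = ∑ j, v j * f (Pi.single j 1) := by
  have hv : v = ∑ j, v j • (Pi.single j 1 : Fin n → ℝ) := by
    ext k
    simp [Pi.single_apply]
  conv_lhs => rw [hv]
  rw [map_sum]
  simp [smul_eq_mul]

/-- Transformation to canonical form: if `B` defines a Poisson bracket of
constant rank `2d = n - q` on a neighbourhood `U` of `y₀`, `θ : U → V` is a diffeomorphism
(with inverse `θinv`) whose components `z_a = θ(·)_a` satisfy the Darboux bracket relations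
`{z_a, z_b}_B = (B₀)_{a b}` (encoding `{P_i,P_j} = 0`, `{P_i,Q_j} = -δ_ij`, `{Q_i,Q_j} = 0`,
`{·,C_l} = 0`), and `y(t) ∈ U` solves the Poisson system `ẏ = B(y)∇H(y)`, then
`z(t) = θ(y(t))` solves `ż = B₀ ∇K(z)` with `K = H ∘ θ⁻¹`. -/
theorem statement_2 {d q : ℕ} (U V : Set (Fin (2*d+q) → ℝ)) (hU : IsOpen U) (hV : IsOpen V)
    (y₀ : Fin (2*d+q) → ℝ) (hy₀ : y₀ ∈ U)
    (B : (Fin (2*d+q) → ℝ) → Matrix (Fin (2*d+q)) (Fin (2*d+q)) ℝ)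
    (hBsmooth : ∀ i j, ContDiffOn ℝ (⊤ : ℕ∞) (fun y => B y i j) U)
    (hskew : ∀ y ∈ U, ∀ i j, B y i j = - B y j i)
    (hjacobi : ∀ y ∈ U, ∀ i j k : Fin (2*d+q),
        ∑ l, (pd (fun x => B x i j) y l * B y l k
            + pd (fun x => B x j k) y l * B y l i
            + pd (fun x => B x k i) y l * B y l j) = 0)
    (hrank : ∀ y ∈ U, (B y).rank = 2*d)
    (θ θinv : (Fin (2*d+q) → ℝ) → (Fin (2*d+q) → ℝ))
    (hθ : ContDiffOn ℝ (⊤ : ℕ∞) θ U) (hθinv : ContDiffOn ℝ (⊤ : ℕ∞) θinv V)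
    (hmaps : Set.MapsTo θ U V) (hmaps' : Set.MapsTo θinv V U)
    (hleft : ∀ y ∈ U, θinv (θ y) = y) (hright : ∀ z ∈ V, θ (θinv z) = z)
    (hdarboux : ∀ y ∈ U, ∀ a b : Fin (2*d+q),
        bracket B (fun x => θ x a) (fun x => θ x b) y = B0mat d q a b)
    (H : (Fin (2*d+q) → ℝ) → ℝ) (hH : ContDiffOn ℝ (⊤ : ℕ∞) H U)
    (y : ℝ → (Fin (2*d+q) → ℝ)) (hyU : ∀ t, y t ∈ U)
    (hsol : ∀ t, HasDerivAt y ((B (y t)).mulVec (grad H (y t))) t) :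
    ∀ t, HasDerivAt (fun s => θ (y s))
      ((B0mat d q).mulVec (grad (H ∘ θinv) (θ (y t)))) t := by
  intro t
  set yt := y t with hyt
  have hytU : yt ∈ U := hyU t
  set zt := θ yt with hzt
  have hztV : zt ∈ V := hmaps hytU
  set K : (Fin (2*d+q) → ℝ) → ℝ := H ∘ θinv with hK
  have hθd : HasFDerivAt θ (fderiv ℝ θ yt) yt :=
    ((hθ.contDiffAt (hU.mem_nhds hytU)).differentiableAt (by simp)).hasFDerivAt
  set Dθ := fderiv ℝ θ yt with hDθ
  have hKcd : ContDiffOn ℝ (⊤ : ℕ∞) K V := hH.comp hθinv hmaps'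
  have hKd : HasFDerivAt K (fderiv ℝ K zt) zt :=
    ((hKcd.contDiffAt (hV.mem_nhds hztV)).differentiableAt (by simp)).hasFDerivAt
  set DK := fderiv ℝ K zt with hDK
  have heq : H =ᶠ[nhds yt] fun x => K (θ x) := by
    filter_upwards [hU.mem_nhds hytU] with x hx
    simp [hK, hleft x hx]
  have hHder : HasFDerivAt H (DK.comp Dθ) yt :=
    (hKd.comp yt hθd).congr_of_eventuallyEq heq
  have hP : ∀ (a i : Fin (2*d+q)), pd (fun x => θ x a) yt i = Dθ (Pi.single i 1) a := by
    intro a i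
    have h : HasFDerivAt (fun x => θ x a)
        ((ContinuousLinearMap.proj a).comp Dθ) yt := by
      simpa [Function.comp_def] using
        ((ContinuousLinearMap.proj a).hasFDerivAt.comp yt hθd :)
    simp [pd, h.fderiv]
  set P : Fin (2*d+q) → Fin (2*d+q) → ℝ := fun a i => Dθ (Pi.single i 1) a with hPdef
  set K' : Fin (2*d+q) → ℝ := fun b => DK (Pi.single b 1) with hK'def
  have hgradH : ∀ k, pd H yt k = ∑ b, P b k * K' b := by
    intro k
    rw [pd, hHder.fderiv]
    simpa [mul_comm] using clm_apply_eq_sum DK (Dθ (Pi.single k 1))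
  have hkey : Dθ ((B yt).mulVec (grad H yt)) = (B0mat d q).mulVec (grad K zt) := by
    funext a
    have hLa : Dθ ((B yt).mulVec (grad H yt)) a
        = ∑ j, ((B yt).mulVec (grad H yt)) j * P a j := by
      have := clm_apply_eq_sum ((ContinuousLinearMap.proj a).comp Dθ)
        ((B yt).mulVec (grad H yt))
      simpa [hPdef] using this
    rw [hLa]
    have hRa : ((B0mat d q).mulVec (grad K zt)) a = ∑ b, B0mat d q a b * K' b := by
      simp [Matrix.mulVec, dotProduct, grad, pd, hK'def, hDK]
    rw [hRa]
    have hdar : ∀ b, B0mat d q a b = ∑ j, ∑ k, P a j * B yt j k * P b k := by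
      intro b
      rw [← hdarboux yt hytU a b]
      simp [bracket, hP, hPdef]
    calc ∑ j, ((B yt).mulVec (grad H yt)) j * P a j
        = ∑ j, ∑ k, ∑ b, P a j * B yt j k * P b k * K' b := by
          refine Finset.sum_congr rfl fun j _ => ?_
          simp only [Matrix.mulVec, dotProduct]
          rw [Finset.sum_mul]
          refine Finset.sum_congr rfl fun k _ => ?_
          have : grad H yt k = ∑ b, P b k * K' b := hgradH k
          rw [this, Finset.mul_sum, Finset.sum_mul]
          refine Finset.sum_congr rfl fun b _ => ?_
          ring
      _ = ∑ j, ∑ b, ∑ k, P a j * B yt j k * P b k * K' b :=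
          Finset.sum_congr rfl fun j _ => Finset.sum_comm
      _ = ∑ b, ∑ j, ∑ k, P a j * B yt j k * P b k * K' b := Finset.sum_comm
      _ = ∑ b, (∑ j, ∑ k, P a j * B yt j k * P b k) * K' b := by
          refine Finset.sum_congr rfl fun b _ => ?_
          rw [Finset.sum_mul]
          refine Finset.sum_congr rfl fun j _ => ?_
          rw [Finset.sum_mul]
      _ = ∑ b, B0mat d q a b * K' b := by
          refine Finset.sum_congr rfl fun b _ => ?_
          rw [hdar b]
  have hfin := hθd.comp_hasDerivAt t (hsol t)
  rw [hyt] at hkey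
  simpa [Function.comp_def, hkey, hK] using hfin
end

section
/- Let B : U → ℝ^{n×n} be a smooth matrix-valued function defining a Poisson bracket on an open set U ⊆ ℝⁿ, let H : U → ℝ be smooth, and let φ_t denote the phase flow of the Poisson system ẏ = B(y)∇H(y). Then for every t for which the flow is defined on an open subset of U, φ_t is a Poisson map with respect to B: its Jacobian matrix satisfies (∂φ_t/∂y)(y) · B(y) · (∂φ_t/∂y)(y)ᵀ = B(φ_t(y)). -/
open Matrix

/-- The Jacobian matrix of `f` at `y`. -/
noncomputable def jac {n : ℕ} (f : (Fin n → ℝ) → (Fin n → ℝ)) (y : Fin n → ℝ) :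
    Matrix (Fin n) (Fin n) ℝ :=
  fun i j => pd (fun x => f x i) y j

namespace S7

variable {n : ℕ}

/-- matrix-vector product, unbundled -/
def mV (M : Fin n → Fin n → ℝ) (v : Fin n → ℝ) : Fin n → ℝ := fun i => ∑ j, M i j * v j

/-- matrix-matrix product, unbundled -/
def mM (P Q : Fin n → Fin n → ℝ) : Fin n → Fin n → ℝ := fun i k => ∑ j, P i j * Q j k

lemma mV_mM (P Q : Fin n → Fin n → ℝ) (v : Fin n → ℝ) : mV (mM P Q) v = mV P (mV Q v) := by
  funext i
  simp only [mV, mM, Finset.sum_mul, Finset.mul_sum]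
  rw [Finset.sum_comm]
  simp [mul_assoc]

lemma mV_sub (M : Fin n → Fin n → ℝ) (v w : Fin n → ℝ) : mV M (v - w) = mV M v - mV M w := by
  funext i; simp [mV, mul_sub, Finset.sum_sub_distrib]

lemma entry_le_norm (M : Fin n → Fin n → ℝ) (i j : Fin n) : |M i j| ≤ ‖M‖ :=
  le_trans (norm_le_pi_norm (M i) j) (norm_le_pi_norm M i)

lemma mV_norm_le {M : Fin n → Fin n → ℝ} {C : ℝ} (hC : 0 ≤ C)
    (hM : ∀ i j, |M i j| ≤ C) (v : Fin n → ℝ) : ‖mV M v‖ ≤ (n * C) * ‖v‖ := by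
  have h0 : (0:ℝ) ≤ n * C * ‖v‖ := by positivity
  rw [pi_norm_le_iff_of_nonneg h0]
  intro i
  calc ‖mV M v i‖ = |∑ j, M i j * v j| := rfl
    _ ≤ ∑ j, |M i j * v j| := Finset.abs_sum_le_sum_abs _ _
    _ ≤ ∑ _j : Fin n, C * ‖v‖ := by
        refine Finset.sum_le_sum fun j _ => ?_
        rw [abs_mul]
        exact mul_le_mul (hM i j) (norm_le_pi_norm v j) (abs_nonneg _) hC
    _ = (n * C) * ‖v‖ := by simp [Finset.sum_const, Finset.card_univ]; ring

lemma mM_norm_le {P Q : Fin n → Fin n → ℝ} {C : ℝ} (hC : 0 ≤ C)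
    (hP : ∀ i j, |P i j| ≤ C) : ‖mM P Q‖ ≤ (n * C) * ‖Q‖ := by
  have h0 : (0:ℝ) ≤ n * C * ‖Q‖ := by positivity
  rw [pi_norm_le_iff_of_nonneg h0]
  intro i
  have := mV_norm_le hC hP (fun j => Q j i)
  -- mM P Q i k, we bound row i: ‖fun k => ∑ j, P i j * Q j k‖
  rw [pi_norm_le_iff_of_nonneg h0]
  intro k
  calc ‖mM P Q i k‖ = |∑ j, P i j * Q j k| := rfl
    _ ≤ ∑ j, |P i j * Q j k| := Finset.abs_sum_le_sum_abs _ _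
    _ ≤ ∑ _j : Fin n, C * ‖Q‖ := by
        refine Finset.sum_le_sum fun j _ => ?_
        rw [abs_mul]
        exact mul_le_mul (hP i j) (le_trans (norm_le_pi_norm (Q j) k) (norm_le_pi_norm Q j))
          (abs_nonneg _) hC
    _ = (n * C) * ‖Q‖ := by simp [Finset.sum_const, Finset.card_univ]; ring

lemma fderiv_apply_pd {g : (Fin n → ℝ) → ℝ} {z : Fin n → ℝ}
    (hg : DifferentiableAt ℝ g z) (v : Fin n → ℝ) :
    fderiv ℝ g z v = ∑ j, v j * pd g z j := by
  have hv : v = ∑ j : Fin n, v j • (Pi.single j (1:ℝ) : Fin n → ℝ) := by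
    conv_lhs => rw [pi_eq_sum_univ v]
    refine Finset.sum_congr rfl fun j _ => ?_
    congr 1
    funext k
    simp [Pi.single_apply, eq_comm]
  conv_lhs => rw [hv]
  rw [map_sum]
  refine Finset.sum_congr rfl fun j _ => ?_
  rw [_root_.map_smul]
  simp [pd, smul_eq_mul]

lemma hasDerivAt_comp_pd {g : (Fin n → ℝ) → ℝ} {c : ℝ → (Fin n → ℝ)} {c' : Fin n → ℝ} {s : ℝ}
    (hg : DifferentiableAt ℝ g (c s)) (hc : HasDerivAt c c' s) :
    HasDerivAt (fun r => g (c r)) (∑ j, c' j * pd g (c s) j) s := by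
  have h := hg.hasFDerivAt.comp_hasDerivAt s hc
  rwa [fderiv_apply_pd hg] at h

lemma mulVec_eq_mV (M : Matrix (Fin n) (Fin n) ℝ) (v : Fin n → ℝ) :
    M.mulVec v = mV (fun i j => M i j) v := by
  funext i; simp [Matrix.mulVec, dotProduct, mV]

/-- the Poisson vector field -/
noncomputable def pvf (B : (Fin n → ℝ) → Matrix (Fin n) (Fin n) ℝ)
    (H : (Fin n → ℝ) → ℝ) : (Fin n → ℝ) → (Fin n → ℝ) :=
  fun z => (B z).mulVec (grad H z)

lemma pvf_apply (B : (Fin n → ℝ) → Matrix (Fin n) (Fin n) ℝ) (H : (Fin n → ℝ) → ℝ)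
    (z : Fin n → ℝ) (i : Fin n) : pvf B H z i = ∑ j, B z i j * pd H z j := by
  simp [pvf, Matrix.mulVec, dotProduct, grad]

section smooth

variable {U : Set (Fin n → ℝ)} (hU : IsOpen U)
  {B : (Fin n → ℝ) → Matrix (Fin n) (Fin n) ℝ}
  (hBsmooth : ∀ i j, ContDiffOn ℝ (⊤ : ℕ∞) (fun y => B y i j) U)
  {H : (Fin n → ℝ) → ℝ} (hH : ContDiffOn ℝ (⊤ : ℕ∞) H U)

include hU hH in
lemma grad_smooth (j : Fin n) : ContDiffOn ℝ (⊤ : ℕ∞) (fun z => pd H z j) U := by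
  have h1 : ContDiffOn ℝ (⊤ : ℕ∞) (fun z => fderiv ℝ H z) U := hH.fderiv_of_isOpen hU (by simp)
  exact h1.clm_apply contDiffOn_const

include hU hBsmooth hH in
lemma pvf_smooth : ContDiffOn ℝ (⊤ : ℕ∞) (pvf B H) U := by
  rw [contDiffOn_pi]
  intro i
  have : (fun z => pvf B H z i) = fun z => ∑ j, B z i j * pd H z j := by
    funext z; exact pvf_apply B H z i
  rw [this]
  exact ContDiffOn.sum fun j _ => (hBsmooth i j).mul (grad_smooth hU hH j)

end smooth


lemma pd_sum {z : Fin n → ℝ} (A : Fin n → (Fin n → ℝ) → ℝ)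
    (h : ∀ j, DifferentiableAt ℝ (A j) z) (q : Fin n) :
    pd (fun x => ∑ j, A j x) z q = ∑ j, pd (A j) z q := by
  unfold pd
  rw [fderiv_fun_sum (fun j _ => h j), ContinuousLinearMap.sum_apply]

lemma pd_mul {z : Fin n → ℝ} (a b : (Fin n → ℝ) → ℝ) (ha : DifferentiableAt ℝ a z)
    (hb : DifferentiableAt ℝ b z) (q : Fin n) :
    pd (fun x => a x * b x) z q = pd a z q * b z + a z * pd b z q := by
  unfold pd
  rw [fderiv_fun_mul ha hb]
  simp only [ContinuousLinearMap.add_apply, ContinuousLinearMap.smul_apply, smul_eq_mul]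
  ring



section key
variable {U : Set (Fin n → ℝ)} (hU : IsOpen U)
  {B : (Fin n → ℝ) → Matrix (Fin n) (Fin n) ℝ}
  (hBsmooth : ∀ i j, ContDiffOn ℝ (⊤ : ℕ∞) (fun y => B y i j) U)
  (hskew : ∀ y ∈ U, ∀ i j, B y i j = - B y j i)
  (hjacobi : ∀ y ∈ U, ∀ i j k : Fin n,
      ∑ l, (pd (fun x => B x i j) y l * B y l k
          + pd (fun x => B x j k) y l * B y l i
          + pd (fun x => B x k i) y l * B y l j) = 0)
  {H : (Fin n → ℝ) → ℝ} (hH : ContDiffOn ℝ (⊤ : ℕ∞) H U)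
  {z : Fin n → ℝ} (hz : z ∈ U)


include hU hBsmooth hH hz in
lemma diffb' (a b : Fin n) : DifferentiableAt ℝ (fun x => B x a b) z :=
  ((hBsmooth a b).contDiffAt (hU.mem_nhds hz)).differentiableAt (by simp)

include hU hH hz in
lemma diffg' (j : Fin n) : DifferentiableAt ℝ (fun x => pd H x j) z := by
  have hfd : ContDiffOn ℝ (⊤ : ℕ∞) (fun x => fderiv ℝ H x) U := hH.fderiv_of_isOpen hU (by simp)
  have : ContDiffOn ℝ (⊤ : ℕ∞) (fun x => pd H x j) U := hfd.clm_apply contDiffOn_const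
  exact (this.contDiffAt (hU.mem_nhds hz)).differentiableAt (by simp)

include hU hBsmooth hH hz in
lemma jac_pvf_apply (p q : Fin n) :
    jac (pvf B H) z p q
      = ∑ j, (pd (fun x => B x p j) z q * pd H z j
            + B z p j * pd (fun x => pd H x j) z q) := by
  have hrw : (fun x => pvf B H x p) = fun x => ∑ j, B x p j * pd H x j := by
    funext x; exact pvf_apply B H x p
  show pd (fun x => pvf B H x p) z q = _
  rw [hrw, pd_sum (fun j x => B x p j * pd H x j)
    (fun j => ((diffb' hU hBsmooth hH hz p j).mul (diffg' hU hH hz j))) q]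
  exact Finset.sum_congr rfl fun j _ =>
    pd_mul _ _ (diffb' hU hBsmooth hH hz p j) (diffg' hU hH hz j) q

include hU hH hz in
lemma h2sym (j q : Fin n) :
    pd (fun x => pd H x j) z q = pd (fun x => pd H x q) z j := by
  have hfd : ContDiffOn ℝ (⊤ : ℕ∞) (fun x => fderiv ℝ H x) U := hH.fderiv_of_isOpen hU (by simp)
  have hf'' : HasFDerivAt (fun x => fderiv ℝ H x) (fderiv ℝ (fun x => fderiv ℝ H x) z) z :=
    ((hfd.contDiffAt (hU.mem_nhds hz)).differentiableAt (by simp)).hasFDerivAt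
  have hev : ∀ᶠ x in nhds z, HasFDerivAt H (fderiv ℝ H x) x := by
    filter_upwards [hU.mem_nhds hz] with x hx
    exact ((hH.contDiffAt (hU.mem_nhds hx)).differentiableAt (by simp)).hasFDerivAt
  have hsymm := second_derivative_symmetric_of_eventually hev hf''
  have happ : ∀ v w : Fin n → ℝ,
      fderiv ℝ (fun x => fderiv ℝ H x v) z w
        = fderiv ℝ (fun x => fderiv ℝ H x) z w v := by
    intro v w
    have h1 : HasFDerivAt (fun x => fderiv ℝ H x v)
        ((ContinuousLinearMap.apply ℝ ℝ v).comp (fderiv ℝ (fun x => fderiv ℝ H x) z)) z :=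
      (ContinuousLinearMap.apply ℝ ℝ v).hasFDerivAt.comp z hf''
    rw [h1.fderiv]
    rfl
  show fderiv ℝ (fun x => fderiv ℝ H x (Pi.single j 1)) z (Pi.single q 1) = _
  rw [happ, hsymm (Pi.single q 1) (Pi.single j 1), ← happ]
  rfl

include hU hskew hz in
lemma skewd (p q l : Fin n) :
    pd (fun x => B x q p) z l = - pd (fun x => B x p q) z l := by
  have hev : (fun x => B x q p) =ᶠ[nhds z] (fun x => -B x p q) := by
    filter_upwards [hU.mem_nhds hz] with x hx
    exact hskew x hx q p
  unfold pd
  rw [hev.fderiv_eq, fderiv_fun_neg]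
  simp

include hU hskew hjacobi hz in
lemma jacid (i k j : Fin n) :
    ∑ l, pd (fun x => B x i k) z l * B z l j
      = ∑ l, pd (fun x => B x i j) z l * B z l k
        + ∑ l, B z i l * pd (fun x => B x k j) z l := by
  have h0 := hjacobi z hz i k j
  rw [Finset.sum_add_distrib, Finset.sum_add_distrib] at h0
  have e2 : ∑ l, pd (fun x => B x k j) z l * B z l i
      = -∑ l, B z i l * pd (fun x => B x k j) z l := by
    rw [← Finset.sum_neg_distrib]
    refine Finset.sum_congr rfl fun l _ => ?_
    rw [hskew z hz l i]; ring
  have e3 : ∑ l, pd (fun x => B x j i) z l * B z l k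
      = -∑ l, pd (fun x => B x i j) z l * B z l k := by
    rw [← Finset.sum_neg_distrib]
    refine Finset.sum_congr rfl fun l _ => ?_
    rw [skewd hU hskew hz i j l]; ring
  rw [e2, e3] at h0
  linarith

include hU hBsmooth hskew hjacobi hH hz in
lemma keyid (i k : Fin n) :
    ∑ l, pvf B H z l * pd (fun x => B x i k) z l
      = ∑ l, jac (pvf B H) z i l * B z l k + ∑ l, B z i l * jac (pvf B H) z k l := by
  have T24 : (∑ l, ∑ j, B z i j * pd (fun x => pd H x j) z l * B z l k)
      + (∑ l, ∑ j, B z i l * (B z k j * pd (fun x => pd H x j) z l)) = 0 := by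
    have h4 : (∑ l, ∑ j, B z i l * (B z k j * pd (fun x => pd H x j) z l))
        = ∑ a, ∑ b, B z i b * (B z k a * pd (fun x => pd H x a) z b) := Finset.sum_comm
    have h2' : (∑ l, ∑ j, B z i j * pd (fun x => pd H x j) z l * B z l k)
        = ∑ a, ∑ b, -(B z i b * (B z k a * pd (fun x => pd H x a) z b)) := by
      refine Finset.sum_congr rfl fun a _ => Finset.sum_congr rfl fun b _ => ?_
      rw [h2sym hU hH hz b a, hskew z hz a k]
      ring
    rw [h2', h4]
    simp [← Finset.sum_add_distrib]
  calc ∑ l, pvf B H z l * pd (fun x => B x i k) z l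
      = ∑ j, (∑ l, pd (fun x => B x i k) z l * B z l j) * pd H z j := by
        have e1 : ∀ l, pvf B H z l * pd (fun x => B x i k) z l
            = ∑ j, pd (fun x => B x i k) z l * B z l j * pd H z j := by
          intro l
          rw [pvf_apply, Finset.sum_mul]
          exact Finset.sum_congr rfl fun j _ => by ring
        rw [Finset.sum_congr rfl fun l _ => e1 l, Finset.sum_comm]
        exact Finset.sum_congr rfl fun j _ => (Finset.sum_mul _ _ _).symm
    _ = ∑ j, (∑ l, pd (fun x => B x i j) z l * B z l k
            + ∑ l, B z i l * pd (fun x => B x k j) z l) * pd H z j := by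
        refine Finset.sum_congr rfl fun j _ => ?_
        rw [jacid hU hskew hjacobi hz i k j]
    _ = (∑ j, ∑ l, pd (fun x => B x i j) z l * B z l k * pd H z j)
        + (∑ j, ∑ l, B z i l * pd (fun x => B x k j) z l * pd H z j) := by
        rw [← Finset.sum_add_distrib]
        refine Finset.sum_congr rfl fun j _ => ?_
        rw [add_mul, Finset.sum_mul, Finset.sum_mul]
    _ = ∑ l, jac (pvf B H) z i l * B z l k + ∑ l, B z i l * jac (pvf B H) z k l := by
        have ji : ∀ l, jac (pvf B H) z i l * B z l k
            = ∑ j, (pd (fun x => B x i j) z l * pd H z j * B z l k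
                + B z i j * pd (fun x => pd H x j) z l * B z l k) := by
          intro l
          rw [jac_pvf_apply hU hBsmooth hH hz i l, Finset.sum_mul]
          exact Finset.sum_congr rfl fun j _ => by ring
        have jk : ∀ l, B z i l * jac (pvf B H) z k l
            = ∑ j, (B z i l * (pd (fun x => B x k j) z l * pd H z j)
                + B z i l * (B z k j * pd (fun x => pd H x j) z l)) := by
          intro l
          rw [jac_pvf_apply hU hBsmooth hH hz k l, Finset.mul_sum]
          exact Finset.sum_congr rfl fun j _ => by ring
        rw [Finset.sum_congr rfl fun l _ => ji l, Finset.sum_congr rfl fun l _ => jk l]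
        simp only [Finset.sum_add_distrib]
        have c1 : (∑ j, ∑ l, pd (fun x => B x i j) z l * B z l k * pd H z j)
            = ∑ l, ∑ j, pd (fun x => B x i j) z l * pd H z j * B z l k := by
          rw [Finset.sum_comm]
          exact Finset.sum_congr rfl fun l _ => Finset.sum_congr rfl fun j _ => by ring
        have c3 : (∑ j, ∑ l, B z i l * pd (fun x => B x k j) z l * pd H z j)
            = ∑ l, ∑ j, B z i l * (pd (fun x => B x k j) z l * pd H z j) := by
          rw [Finset.sum_comm]
          exact Finset.sum_congr rfl fun l _ => Finset.sum_congr rfl fun j _ => by ring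
        rw [c1, c3]
        linarith [T24]

end key


lemma mMt_norm_le {P Q : Fin n → Fin n → ℝ} {C : ℝ} (hC : 0 ≤ C)
    (hP : ∀ i j, |P i j| ≤ C) :
    ‖(fun i k => ∑ l, Q i l * P k l : Fin n → Fin n → ℝ)‖ ≤ (n * C) * ‖Q‖ := by
  have h0 : (0:ℝ) ≤ n * C * ‖Q‖ := by positivity
  rw [pi_norm_le_iff_of_nonneg h0]
  intro i
  rw [pi_norm_le_iff_of_nonneg h0]
  intro k
  calc ‖∑ l, Q i l * P k l‖ = |∑ l, Q i l * P k l| := rfl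
    _ ≤ ∑ l, |Q i l * P k l| := Finset.abs_sum_le_sum_abs _ _
    _ ≤ ∑ _l : Fin n, ‖Q‖ * C := by
        refine Finset.sum_le_sum fun l _ => ?_
        rw [abs_mul]
        exact mul_le_mul (entry_le_norm Q i l) (hP k l) (abs_nonneg _) (norm_nonneg _)
    _ = (n * C) * ‖Q‖ := by simp [Finset.sum_const, Finset.card_univ]; ring

set_option maxHeartbeats 4000000 in
theorem aux (U : Set (Fin n → ℝ)) (hU : IsOpen U)
    (B : (Fin n → ℝ) → Matrix (Fin n) (Fin n) ℝ)
    (hBsmooth : ∀ i j, ContDiffOn ℝ (⊤ : ℕ∞) (fun y => B y i j) U)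
    (hskew : ∀ y ∈ U, ∀ i j, B y i j = - B y j i)
    (hjacobi : ∀ y ∈ U, ∀ i j k : Fin n,
        ∑ l, (pd (fun x => B x i j) y l * B y l k
            + pd (fun x => B x j k) y l * B y l i
            + pd (fun x => B x k i) y l * B y l j) = 0)
    (H : (Fin n → ℝ) → ℝ) (hH : ContDiffOn ℝ (⊤ : ℕ∞) H U)
    (φ : ℝ → (Fin n → ℝ) → (Fin n → ℝ)) (t : ℝ) (ht : 0 ≤ t)
    (W : Set (Fin n → ℝ)) (hW : IsOpen W) (hWU : W ⊆ U)
    (hmem : ∀ s ∈ Set.Icc 0 t, ∀ y ∈ W, φ s y ∈ U)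
    (hφ0 : ∀ y ∈ W, φ 0 y = y)
    (hflow : ∀ y ∈ W, ∀ s ∈ Set.Icc 0 t,
      HasDerivAt (fun r => φ r y) (pvf B H (φ s y)) s) :
    ∀ y ∈ W, jac (φ t) y * B y * (jac (φ t) y)ᵀ = B (φ t y) := by
  intro y hy
  have h0t : (0:ℝ) ∈ Set.Icc 0 t := ⟨le_refl 0, ht⟩
  -- the vector field and its derivative data
  set f : (Fin n → ℝ) → (Fin n → ℝ) := pvf B H with hfdef
  have hfU : ContDiffOn ℝ (⊤ : ℕ∞) f U := pvf_smooth hU hBsmooth hH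
  set F : (Fin n → ℝ) → (Fin n → ℝ) →L[ℝ] (Fin n → ℝ) := fun z => fderiv ℝ f z with hFdef
  have hFsm : ContDiffOn ℝ (⊤ : ℕ∞) F U := hfU.fderiv_of_isOpen hU (by simp)
  have hFc : ContinuousOn F U := hFsm.continuousOn
  have hFd : ∀ z ∈ U, HasFDerivAt f (F z) z := fun z hz =>
    ((hfU.contDiffAt (hU.mem_nhds hz)).differentiableAt (by simp)).hasFDerivAt
  have hFcomp : ∀ z ∈ U, ∀ i, HasFDerivAt (fun x => f x i)
      ((ContinuousLinearMap.proj i).comp (F z)) z := by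
    intro z hz i
    exact ((ContinuousLinearMap.proj i : (Fin n → ℝ) →L[ℝ] ℝ).hasFDerivAt.comp z (hFd z hz) :)
  have hFmV : ∀ z ∈ U, ∀ v, F z v = mV (fun i j => jac f z i j) v := by
    intro z hz v
    funext i
    have h1 := (hFcomp z hz i).fderiv
    have h2 : F z v i = fderiv ℝ (fun x => f x i) z v := by
      rw [h1]; rfl
    rw [h2, fderiv_apply_pd (hFcomp z hz i).differentiableAt]
    simp only [mV, jac]
    exact Finset.sum_congr rfl fun j _ => mul_comm _ _
  have jacCont : ContinuousOn (fun z => (fun i j => jac f z i j : Fin n → Fin n → ℝ)) U := by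
    apply continuousOn_pi.2
    intro i
    apply continuousOn_pi.2
    intro j
    have hent : ∀ z ∈ U, jac f z i j = F z (Pi.single j 1) i := by
      intro z hz
      rw [hFmV z hz]
      simp [mV, Pi.single_apply, mul_ite, Finset.sum_ite_eq', Finset.mem_univ]
    have : ContinuousOn (fun z => F z (Pi.single j 1) i) U :=
      (continuous_apply i).comp_continuousOn
        ((ContinuousLinearMap.apply ℝ (Fin n → ℝ) (Pi.single j 1)).continuous.comp_continuousOn hFc)
    exact this.congr hent
  -- trajectories
  have htraj_cont : ∀ x ∈ W, ContinuousOn (fun s => φ s x) (Set.Icc 0 t) :=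
    fun x hx s hs => ((hflow x hx s hs).continuousAt).continuousWithinAt
  set K : Set (Fin n → ℝ) := (fun s => φ s y) '' Set.Icc 0 t with hKdef
  have hKc : IsCompact K := isCompact_Icc.image_of_continuousOn (htraj_cont y hy)
  have hKU : K ⊆ U := by rintro z ⟨s, hs, rfl⟩; exact hmem s hs y hy
  have hφsyK : ∀ s ∈ Set.Icc 0 t, φ s y ∈ K := fun s hs => ⟨s, hs, rfl⟩
  obtain ⟨ε, hε, hK2U⟩ := hKc.exists_cthickening_subset_open hU hKU
  set K1 : Set (Fin n → ℝ) := Metric.cthickening (ε/2) K with hK1def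
  set K2 : Set (Fin n → ℝ) := Metric.cthickening ε K with hK2def
  have hK12 : K1 ⊆ K2 := Metric.cthickening_mono (by linarith) K
  have hKK1 : K ⊆ K1 := Metric.self_subset_cthickening K
  have hK1U : K1 ⊆ U := hK12.trans hK2U
  have hK2c : IsCompact K2 := hKc.cthickening
  have hK1closed : IsClosed K1 := Metric.isClosed_cthickening
  have hK1ball : ∀ z k, k ∈ K → dist z k ≤ ε/2 → z ∈ K1 := by
    intro z k hk hd
    rw [hK1def, hKc.cthickening_eq_biUnion_closedBall (by linarith)]
    exact Set.mem_biUnion hk hd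
  have hK2ball : ∀ z k, k ∈ K → dist z k ≤ ε → z ∈ K2 := by
    intro z k hk hd
    rw [hK2def, hKc.cthickening_eq_biUnion_closedBall (by linarith)]
    exact Set.mem_biUnion hk hd
  -- bounds
  obtain ⟨Cop0, hCop0⟩ := hK2c.exists_bound_of_continuousOn (hFc.mono hK2U)
  obtain ⟨Mf0, hMf0⟩ := hK2c.exists_bound_of_continuousOn (hfU.continuousOn.mono hK2U)
  set Mf : ℝ := max Mf0 0 with hMfdef
  set L : ℝ := max (max Cop0 0) (4*Mf/ε) with hLdef
  have hL0 : 0 ≤ L := le_trans (le_max_right _ _) (le_max_left _ _)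
  have hlip : ∀ a ∈ K1, ∀ b ∈ K1, ‖f a - f b‖ ≤ L * ‖a - b‖ := by
    intro a ha b hb
    by_cases hab : ‖a - b‖ ≤ ε/2
    · have hseg : segment ℝ b a ⊆ K2 := by
        intro w hw
        obtain ⟨k, hk, hbk⟩ : ∃ k ∈ K, dist b k ≤ ε/2 := by
          have hb' := hb
          rw [hK1def, hKc.cthickening_eq_biUnion_closedBall (by linarith)] at hb'
          simpa using hb'
        refine hK2ball w k hk ?_
        have hwb : dist w b ≤ dist a b := by
          have hsub : segment ℝ b a ⊆ Metric.closedBall b (dist a b) :=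
            (convex_closedBall b (dist a b)).segment_subset
              (Metric.mem_closedBall_self dist_nonneg)
              (by simp [Metric.mem_closedBall, dist_comm])
          simpa [Metric.mem_closedBall] using hsub hw
        have hab' : dist a b ≤ ε/2 := by rw [dist_eq_norm]; exact hab
        calc dist w k ≤ dist w b + dist b k := dist_triangle _ _ _
          _ ≤ ε/2 + ε/2 := add_le_add (hwb.trans hab') hbk
          _ = ε := by ring
      have hmvt := Convex.norm_image_sub_le_of_norm_hasFDerivWithin_le
        (f := f) (f' := F) (C := L)
        (fun w hw => (hFd w (hK2U (hseg hw))).hasFDerivWithinAt)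
        (fun w hw => le_trans (hCop0 w (hseg hw))
          (le_trans (le_max_left Cop0 0) (le_max_left _ _)))
        (convex_segment b a) (left_mem_segment ℝ b a) (right_mem_segment ℝ b a)
      exact hmvt
    · push_neg at hab
      have ha2 := hMf0 a (hK12 ha)
      have hb2 := hMf0 b (hK12 hb)
      have hMfge : Mf0 ≤ Mf := le_max_left _ _
      have hMf0' : 0 ≤ Mf := le_max_right _ _
      have hLge : 4*Mf/ε ≤ L := le_max_right _ _
      calc ‖f a - f b‖ ≤ ‖f a‖ + ‖f b‖ := norm_sub_le _ _
        _ ≤ 2*Mf := by linarith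
        _ = (4*Mf/ε)*(ε/2) := by field_simp; ring
        _ ≤ (4*Mf/ε)*‖a-b‖ := mul_le_mul_of_nonneg_left (le_of_lt hab) (by positivity)
        _ ≤ L*‖a-b‖ := mul_le_mul_of_nonneg_right hLge (norm_nonneg _)
  set C1 : ℝ := Real.exp (L * t) with hC1def
  have hC1ge : (1:ℝ) ≤ C1 := by
    rw [hC1def]; rw [show (1:ℝ) = Real.exp 0 by simp]
    exact Real.exp_le_exp.2 (by positivity)
  have hC1pos : 0 < C1 := lt_of_lt_of_le one_pos hC1ge
  -- Gronwall comparison of trajectories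
  have gron : ∀ x ∈ W, ∀ T' ∈ Set.Icc 0 t, (∀ s ∈ Set.Ico 0 T', φ s x ∈ K1) →
      ∀ s ∈ Set.Icc 0 T', dist (φ s x) (φ s y) ≤ dist x y * Real.exp (L * s) := by
    intro x hx T' hT' hmemK1 s hs
    have hLnn : ∀ r : ℝ, LipschitzOnWith L.toNNReal f K1 := by
      intro _
      refine LipschitzOnWith.of_dist_le_mul fun p hp q hq => ?_
      rw [dist_eq_norm, dist_eq_norm, Real.coe_toNNReal L hL0]
      exact hlip p hp q hq
    have hsub : Set.Icc (0:ℝ) T' ⊆ Set.Icc 0 t := Set.Icc_subset_Icc (le_refl 0) hT'.2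
    have := dist_le_of_trajectories_ODE_of_mem (v := fun _ z => f z) (s := fun _ => K1)
      (fun r _ => hLnn r)
      ((htraj_cont x hx).mono hsub)
      (fun r hr => (hflow x hx r (hsub ⟨hr.1, le_of_lt hr.2⟩)).hasDerivWithinAt)
      (fun r hr => hmemK1 r hr)
      ((htraj_cont y hy).mono hsub)
      (fun r hr => (hflow y hy r (hsub ⟨hr.1, le_of_lt hr.2⟩)).hasDerivWithinAt)
      (fun r hr => hKK1 (hφsyK r (hsub ⟨hr.1, le_of_lt hr.2⟩)))
      (le_of_eq (by rw [hφ0 x hx, hφ0 y hy]))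
      s hs
    simpa [Real.coe_toNNReal L hL0] using this
  set δ₀ : ℝ := (ε/4)/C1 with hδ₀def
  have hδ₀pos : 0 < δ₀ := by rw [hδ₀def]; positivity
  have hδ₀ε : δ₀ ≤ ε/4 := by
    rw [hδ₀def]
    exact div_le_self (by positivity) hC1ge
  have hboot : ∀ x ∈ W, dist x y ≤ δ₀ → ∀ s ∈ Set.Icc 0 t, φ s x ∈ K1 := by
    intro x hx hd
    by_contra hbad
    push_neg at hbad
    obtain ⟨s₀, hs₀, hs₀bad⟩ := hbad
    set Sb := {s | s ∈ Set.Icc 0 t ∧ φ s x ∉ K1} with hSbdef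
    have hs₀Sb : s₀ ∈ Sb := ⟨hs₀, hs₀bad⟩
    have hSbne : Sb.Nonempty := ⟨s₀, hs₀Sb⟩
    have hSbb : BddBelow Sb := ⟨0, fun s hs => hs.1.1⟩
    set σ := sInf Sb with hσdef
    have hσ0 : 0 ≤ σ := le_csInf hSbne fun s hs => hs.1.1
    have hσt : σ ≤ t := le_trans (csInf_le hSbb hs₀Sb) hs₀.2
    have hσIcc : σ ∈ Set.Icc 0 t := ⟨hσ0, hσt⟩
    have hpre : ∀ s ∈ Set.Ico 0 σ, φ s x ∈ K1 := by
      intro s hsI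
      by_contra hn
      have hmem' : s ∈ Sb := ⟨⟨hsI.1, le_trans (le_of_lt hsI.2) hσt⟩, hn⟩
      exact absurd (csInf_le hSbb hmem') (not_le.2 hsI.2)
    have hc : ContinuousAt (fun s => φ s x) σ := (hflow x hx σ hσIcc).continuousAt
    have hσK1 : φ σ x ∈ K1 := by
      rcases eq_or_lt_of_le hσ0 with h0 | h0
      · have hφσ : φ σ x = x := by rw [← h0]; exact hφ0 x hx
        rw [hφσ]
        refine hK1ball x (φ 0 y) (hφsyK 0 h0t) ?_
        rw [hφ0 y hy]
        calc dist x y ≤ δ₀ := hd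
          _ ≤ ε/4 := hδ₀ε
          _ ≤ ε/2 := by linarith
      · haveI hne : (nhdsWithin σ (Set.Ico 0 σ)).NeBot := by
          apply mem_closure_iff_nhdsWithin_neBot.1
          rw [closure_Ico (ne_of_lt h0)]
          exact ⟨hσ0, le_refl σ⟩
        have htd : Filter.Tendsto (fun s => φ s x) (nhdsWithin σ (Set.Ico 0 σ))
            (nhds (φ σ x)) := hc.tendsto.mono_left nhdsWithin_le_nhds
        refine hK1closed.mem_of_tendsto htd ?_
        exact Filter.eventually_of_mem self_mem_nhdsWithin fun s hs => hpre s hs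
    have hdσ : dist (φ σ x) (φ σ y) ≤ ε/4 := by
      have hgr := gron x hx σ hσIcc hpre σ ⟨hσ0, le_refl σ⟩
      have hexp : Real.exp (L*σ) ≤ C1 := by
        rw [hC1def]
        exact Real.exp_le_exp.2 (mul_le_mul_of_nonneg_left hσt hL0)
      calc dist (φ σ x) (φ σ y) ≤ dist x y * Real.exp (L*σ) := hgr
        _ ≤ δ₀ * C1 :=
          mul_le_mul hd hexp (le_of_lt (Real.exp_pos _)) (le_of_lt hδ₀pos)
        _ = ε/4 := by rw [hδ₀def]; exact div_mul_cancel₀ _ (ne_of_gt hC1pos)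
    obtain ⟨η, hη, hηc⟩ := Metric.continuousAt_iff.1 hc (ε/8) (by positivity)
    obtain ⟨s', hs'Sb, hs'lt⟩ := (csInf_lt_iff hSbb hSbne).1 (lt_add_of_pos_right σ hη)
    have hs'ge : σ ≤ s' := csInf_le hSbb hs'Sb
    have hd1 : dist s' σ < η := by
      rw [Real.dist_eq, abs_of_nonneg (by linarith)]
      linarith
    have hd2 : dist (φ s' x) (φ σ x) < ε/8 := hηc hd1
    have hK1' : φ s' x ∈ K1 := by
      refine hK1ball _ (φ σ y) (hφsyK σ hσIcc) ?_
      calc dist (φ s' x) (φ σ y) ≤ dist (φ s' x) (φ σ x) + dist (φ σ x) (φ σ y) :=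
            dist_triangle _ _ _
        _ ≤ ε/2 := by linarith
    exact hs'Sb.2 hK1'
  have hest : ∀ x ∈ W, dist x y ≤ δ₀ → ∀ s ∈ Set.Icc 0 t,
      dist (φ s x) (φ s y) ≤ dist x y * C1 := by
    intro x hx hd s hs
    refine (gron x hx t ⟨ht, le_refl t⟩
      (fun r hr => hboot x hx hd r ⟨hr.1, le_of_lt (lt_of_lt_of_le hr.2 (le_refl t))⟩) s hs).trans ?_
    have : Real.exp (L * s) ≤ C1 := by
      rw [hC1def]
      exact Real.exp_le_exp.2 (mul_le_mul_of_nonneg_left hs.2 hL0)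
    exact mul_le_mul_of_nonneg_left this dist_nonneg
  -- modulus of differentiability along the tube
  have hmod : ∀ ρ > (0:ℝ), ∃ δ > (0:ℝ), ∀ b ∈ K, ∀ a ∈ K1, ‖a - b‖ ≤ δ →
      ‖f a - f b - F b (a - b)‖ ≤ ρ * ‖a - b‖ := by
    intro ρ hρ
    have hUC := hK2c.uniformContinuousOn_of_continuous (hFc.mono hK2U)
    rw [Metric.uniformContinuousOn_iff] at hUC
    obtain ⟨δ₁, hδ₁, hδ₁c⟩ := hUC ρ hρ
    refine ⟨min (δ₁/2) (ε/2), by positivity, ?_⟩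
    intro b hb a ha hab
    have hdistab : dist a b ≤ min (δ₁/2) (ε/2) := by rw [dist_eq_norm]; exact hab
    have hsegball : segment ℝ b a ⊆ Metric.closedBall b (dist a b) :=
      (convex_closedBall b (dist a b)).segment_subset (Metric.mem_closedBall_self dist_nonneg)
        (by simp [Metric.mem_closedBall, dist_comm])
    have hseg : segment ℝ b a ⊆ K2 := by
      intro w hw
      refine hK2ball w b hb ?_
      have h1 : dist w b ≤ dist a b := by simpa [Metric.mem_closedBall] using hsegball hw
      have h2 : dist a b ≤ ε/2 := hdistab.trans (min_le_right _ _)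
      linarith
    have hbound : ∀ w ∈ segment ℝ b a, ‖F w - F b‖ ≤ ρ := by
      intro w hw
      have hwK2 := hseg hw
      have hbK2 : K2 ⊆ K2 := le_refl _
      have hbK2' : b ∈ K2 := hK12 (hKK1 hb)
      have hwb : dist w b < δ₁ := by
        have h1 : dist w b ≤ dist a b := by simpa [Metric.mem_closedBall] using hsegball hw
        have h2 : dist a b ≤ δ₁/2 := hdistab.trans (min_le_left _ _)
        linarith
      have := hδ₁c w hwK2 b hbK2' hwb
      rw [dist_eq_norm] at this
      exact le_of_lt this
    exact Convex.norm_image_sub_le_of_norm_hasFDerivWithin_le'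
      (fun w hw => (hFd w (hK2U (hseg hw))).hasFDerivWithinAt) hbound (convex_segment b a)
      (left_mem_segment ℝ b a) (right_mem_segment ℝ b a)
  -- the clamped time parametrization
  set proj : ℝ → ℝ := fun s => max 0 (min s t) with hprojdef
  have hproj_mem : ∀ s, proj s ∈ Set.Icc 0 t :=
    fun s => ⟨le_max_left _ _, max_le ht (min_le_right s t)⟩
  have hproj_id : ∀ s ∈ Set.Icc 0 t, proj s = s := by
    intro s hs
    rw [hprojdef]
    simp only
    rw [min_eq_left hs.2, max_eq_right hs.1]
  have hproj_cont : Continuous proj := continuous_const.max (continuous_id.min continuous_const)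
  set Ay : ℝ → (Fin n → Fin n → ℝ) := fun s => (fun i j => jac f (φ (proj s) y) i j) with hAydef
  have htrajK : ∀ s, φ (proj s) y ∈ K := fun s => hφsyK _ (hproj_mem s)
  have hAyc : Continuous Ay := by
    rw [hAydef]
    exact jacCont.comp_continuous
      ((htraj_cont y hy).comp_continuous hproj_cont hproj_mem) (fun s => hKU (htrajK s))
  obtain ⟨CA0, hCA0⟩ := hKc.exists_bound_of_continuousOn (jacCont.mono hKU)
  set CA : ℝ := max CA0 0 + 1 with hCAdef
  have hCA1 : (1:ℝ) ≤ CA := by rw [hCAdef]; have := le_max_right CA0 (0:ℝ); linarith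
  have hCApos : 0 < CA := lt_of_lt_of_le one_pos hCA1
  have hAy_entry : ∀ s i j, |Ay s i j| ≤ CA := by
    intro s i j
    refine (entry_le_norm (Ay s) i j).trans ?_
    rw [hCAdef]
    have := hCA0 _ (htrajK s)
    have h2 := le_max_left CA0 (0:ℝ)
    calc ‖Ay s‖ ≤ CA0 := this
      _ ≤ max CA0 0 + 1 := by linarith [le_max_left CA0 (0:ℝ)]
  set KG : ℝ := (n : ℝ) * CA + 1 with hKGdef
  have hKGpos : 0 < KG := by rw [hKGdef]; positivity
  have hnCA_KG : (n:ℝ) * CA ≤ KG := by rw [hKGdef]; linarith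
  -- the Dyson series for the variational equation
  obtain ⟨J, hJd, hJ0, hJcont⟩ :
      ∃ J : ℝ → (Fin n → Fin n → ℝ),
        (∀ s, HasDerivAt J (mM (Ay s) (J (proj s))) s)
        ∧ J 0 = (fun i j => if i = j then (1:ℝ) else 0)
        ∧ Continuous J := by
    classical
    let Iseq : ℕ → ℝ → (Fin n → Fin n → ℝ) := fun m => Nat.rec
        (fun _ => fun i j => if i = j then (1:ℝ) else 0)
        (fun _ Iprev s => ∫ r in (0:ℝ)..s, mM (Ay r) (Iprev (proj r))) m
    have hIsucc : ∀ m s, Iseq (m+1) s = ∫ r in (0:ℝ)..s, mM (Ay r) (Iseq m (proj r)) :=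
      fun m s => rfl
    have hmMc : ∀ (X : ℝ → (Fin n → Fin n → ℝ)), Continuous X →
        Continuous (fun r => mM (Ay r) (X (proj r))) := by
      intro X hX
      refine continuous_pi fun i => continuous_pi fun k => ?_
      simp only [mM]
      refine continuous_finset_sum _ fun j _ => Continuous.mul ?_ ?_
      · exact (continuous_apply j).comp ((continuous_apply i).comp hAyc)
      · exact (continuous_apply k).comp ((continuous_apply j).comp (hX.comp hproj_cont))
    have hIc : ∀ m, Continuous (Iseq m) := by
      intro m; induction m with
      | zero => exact continuous_const
      | succ m ih =>
        have hg := hmMc (Iseq m) ih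
        refine continuous_iff_continuousAt.2 fun s => ?_
        exact ((hg.integral_hasStrictDerivAt 0 s).hasDerivAt).continuousAt
    have hFTCm : ∀ m s, HasDerivAt (Iseq (m+1)) (mM (Ay s) (Iseq m (proj s))) s := by
      intro m s
      exact ((hmMc (Iseq m) (hIc m)).integral_hasStrictDerivAt 0 s).hasDerivAt
    have hIb : ∀ m, ∀ s ∈ Set.Icc 0 t, ‖Iseq m s‖ ≤ KG^m * s^m / (Nat.factorial m) := by
      intro m
      induction m with
      | zero =>
        intro s hs
        simp only [pow_zero, Nat.factorial_zero, Nat.cast_one, mul_one, one_mul, div_one]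
        rw [pi_norm_le_iff_of_nonneg (by norm_num : (0:ℝ) ≤ 1)]
        intro i
        rw [pi_norm_le_iff_of_nonneg (by norm_num : (0:ℝ) ≤ 1)]
        intro j
        show ‖if i = j then (1:ℝ) else 0‖ ≤ 1
        by_cases h : i = j <;> simp [h]
      | succ m ih =>
        intro s hs
        rw [hIsucc]
        have hfacne : ((Nat.factorial m : ℕ) : ℝ) ≠ 0 := by
          exact_mod_cast Nat.factorial_ne_zero m
        have hint1 : IntervalIntegrable (fun r => ‖mM (Ay r) (Iseq m (proj r))‖)
            MeasureTheory.volume 0 s :=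
          ((hmMc (Iseq m) (hIc m)).norm).intervalIntegrable 0 s
        have hint2 : IntervalIntegrable (fun r => KG^(m+1) * r^m / (Nat.factorial m))
            MeasureTheory.volume 0 s :=
          ((continuous_const.mul (continuous_pow m)).div_const _).intervalIntegrable 0 s
        calc ‖∫ r in (0:ℝ)..s, mM (Ay r) (Iseq m (proj r))‖
            ≤ ∫ r in (0:ℝ)..s, ‖mM (Ay r) (Iseq m (proj r))‖ :=
              intervalIntegral.norm_integral_le_integral_norm hs.1
          _ ≤ ∫ r in (0:ℝ)..s, KG^(m+1) * r^m / (Nat.factorial m) := by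
              apply intervalIntegral.integral_mono_on hs.1 hint1 hint2
              intro r hr
              have hrt : r ∈ Set.Icc 0 t := ⟨hr.1, hr.2.trans hs.2⟩
              have hprojr : proj r = r := hproj_id r hrt
              have h1 : ‖mM (Ay r) (Iseq m (proj r))‖ ≤ ((n:ℝ) * CA) * ‖Iseq m (proj r)‖ :=
                mM_norm_le (le_of_lt hCApos) (hAy_entry r)
              have h2 : ‖Iseq m (proj r)‖ ≤ KG^m * r^m / (Nat.factorial m) := by
                rw [hprojr]; exact ih r hrt
              calc ‖mM (Ay r) (Iseq m (proj r))‖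
                  ≤ ((n:ℝ)*CA) * (KG^m * r^m / (Nat.factorial m)) :=
                    h1.trans (mul_le_mul_of_nonneg_left h2 (by positivity))
                _ ≤ KG * (KG^m * r^m / (Nat.factorial m)) := by
                    have hnn : (0:ℝ) ≤ KG^m * r^m / (Nat.factorial m) := by
                      have := hr.1; positivity
                    exact mul_le_mul_of_nonneg_right hnCA_KG hnn
                _ = KG^(m+1)*r^m/(Nat.factorial m) := by ring
          _ = KG^(m+1) * s^(m+1) / (Nat.factorial (m+1)) := by
              have hrw : (fun r : ℝ => KG^(m+1) * r^m / (Nat.factorial m))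
                  = fun r : ℝ => (KG^(m+1) / (Nat.factorial m)) * r^m := by
                funext r; ring
              rw [hrw, intervalIntegral.integral_const_mul, integral_pow]
              have hfs : ((Nat.factorial (m+1) : ℕ) : ℝ)
                  = ((m:ℝ)+1) * ((Nat.factorial m : ℕ) : ℝ) := by
                rw [Nat.factorial_succ]; push_cast; ring
              rw [hfs, zero_pow (Nat.succ_ne_zero m), sub_zero]
              have h1 : ((m:ℝ) + 1) ≠ 0 := by positivity
              field_simp
    have hβs : Summable (fun m => KG * (KG^m * t^m / (Nat.factorial m))) := by
      refine ((Real.summable_pow_div_factorial (KG*t)).mul_left KG).congr fun m => ?_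
      rw [mul_pow]
    have hdb : ∀ m (s : ℝ), ‖mM (Ay s) (Iseq m (proj s))‖
        ≤ KG * (KG^m * t^m / (Nat.factorial m)) := by
      intro m s
      have h1 := mM_norm_le (C := CA) (Q := Iseq m (proj s)) (le_of_lt hCApos) (hAy_entry s)
      have h2 : ‖Iseq m (proj s)‖ ≤ KG^m * t^m / (Nat.factorial m) := by
        refine (hIb m (proj s) (hproj_mem s)).trans ?_
        have hpow : (proj s)^m ≤ t^m := pow_le_pow_left₀ (hproj_mem s).1 (hproj_mem s).2 m
        have hfacpos : (0:ℝ) < ((Nat.factorial m : ℕ) : ℝ) := by positivity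
        exact (div_le_div_iff_of_pos_right hfacpos).2
          (mul_le_mul_of_nonneg_left hpow (pow_nonneg (le_of_lt hKGpos) m))
      calc ‖mM (Ay s) (Iseq m (proj s))‖ ≤ ((n:ℝ)*CA) * ‖Iseq m (proj s)‖ := h1
        _ ≤ KG * (KG^m * t^m / (Nat.factorial m)) :=
            mul_le_mul hnCA_KG h2 (norm_nonneg _) (le_of_lt hKGpos)
    have hsum0 : Summable (fun m => Iseq (m+1) (0:ℝ)) := by
      have hz : (fun m => Iseq (m+1) (0:ℝ)) = fun _ => (0 : Fin n → Fin n → ℝ) := by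
        funext m
        rw [hIsucc]
        exact intervalIntegral.integral_same
      rw [hz]; exact summable_zero
    have hshift : ∀ s, HasDerivAt (fun z => ∑' m, Iseq (m+1) z)
        (∑' m, mM (Ay s) (Iseq m (proj s))) s :=
      fun s => hasDerivAt_tsum hβs (fun m z => hFTCm m z) (fun m z => hdb m z) hsum0 s
    have hsummand : ∀ s : ℝ, Summable (fun m => Iseq (m+1) s) := fun s =>
      summable_of_summable_hasDerivAt hβs (fun m z => hFTCm m z) (fun m z => hdb m z) hsum0 s
    have hsumall : ∀ s : ℝ, Summable (fun m => Iseq m s) := fun s =>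
      (summable_nat_add_iff 1).1 (hsummand s)
    have hco : ∀ (s : ℝ), ∃ Lc : (Fin n → Fin n → ℝ) →L[ℝ] (Fin n → Fin n → ℝ),
        ∀ Q, Lc Q = mM (Ay s) Q := by
      intro s
      refine ⟨LinearMap.toContinuousLinearMap
        { toFun := fun Q => mM (Ay s) Q
          map_add' := by
            intro Q R; funext i k
            simp [mM, mul_add, Finset.sum_add_distrib]
          map_smul' := by
            intro c Q; funext i k
            simp only [mM, RingHom.id_apply, Pi.smul_apply, smul_eq_mul]
            rw [Finset.mul_sum]
            exact Finset.sum_congr rfl fun j _ => by ring }, fun Q => rfl⟩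
    have hd1 : ∀ s, HasDerivAt (fun z => ∑' m, Iseq m z)
        (mM (Ay s) (∑' m, Iseq m (proj s))) s := by
      intro s
      have hJeq : (fun z : ℝ => ∑' m, Iseq m z) = fun z => Iseq 0 z + ∑' m, Iseq (m+1) z := by
        funext z; exact Summable.tsum_eq_zero_add (hsumall z)
      rw [hJeq]
      have h0 : HasDerivAt (fun z : ℝ => Iseq 0 z) 0 s :=
        hasDerivAt_const s (fun i j => if i = j then (1:ℝ) else 0)
      have hadd := h0.add (hshift s)
      rw [zero_add] at hadd
      obtain ⟨Lc, hLc⟩ := hco s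
      have heq : mM (Ay s) (∑' m, Iseq m (proj s)) = ∑' m, mM (Ay s) (Iseq m (proj s)) := by
        rw [← hLc, Lc.map_tsum (hsumall (proj s))]
        exact tsum_congr fun m => hLc _
      rw [heq]
      exact hadd
    have hJ00 : (∑' m, Iseq m (0:ℝ)) = (fun i j => if i = j then (1:ℝ) else 0) := by
      rw [Summable.tsum_eq_zero_add (hsumall 0)]
      have h1 : ∑' m, Iseq (m+1) (0:ℝ) = 0 := by
        have hz : (fun m => Iseq (m+1) (0:ℝ)) = fun _ => (0 : Fin n → Fin n → ℝ) := by
          funext m; rw [hIsucc]; exact intervalIntegral.integral_same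
        rw [hz]; exact tsum_zero
      rw [h1, add_zero]
      rfl
    exact ⟨fun s => ∑' m, Iseq m s, hd1, hJ00,
      continuous_iff_continuousAt.2 fun s => (hd1 s).continuousAt⟩
  have hJd' : ∀ s ∈ Set.Icc 0 t, HasDerivAt J (mM (Ay s) (J s)) s := by
    intro s hs
    have := hJd s
    rwa [hproj_id s hs] at this
  -- differentiability of the flow map at y, with Jacobian J t
  have hmVlin : ∀ (M : Fin n → Fin n → ℝ), ∃ Lc : (Fin n → ℝ) →L[ℝ] (Fin n → ℝ),
      ∀ v, Lc v = mV M v := by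
    intro M
    refine ⟨LinearMap.toContinuousLinearMap
      { toFun := fun v => mV M v
        map_add' := by
          intro v w; funext i
          simp [mV, mul_add, Finset.sum_add_distrib]
        map_smul' := by
          intro cc v; funext i
          simp only [mV, RingHom.id_apply, Pi.smul_apply, smul_eq_mul]
          rw [Finset.mul_sum]
          exact Finset.sum_congr rfl fun j _ => by ring }, fun v => rfl⟩
  obtain ⟨Dclm, hDclm⟩ := hmVlin (J t)
  have hDer : HasFDerivAt (fun x => φ t x) Dclm y := by
    rw [hasFDerivAt_iff_isLittleO_nhds_zero, Asymptotics.isLittleO_iff]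
    intro c hc
    set c2 : ℝ := Real.exp (KG * t) / KG with hc2def
    have hc2pos : 0 < c2 := by rw [hc2def]; positivity
    set ρ : ℝ := c / (C1 * c2 + 1) with hρdef
    have hρpos : 0 < ρ := by
      rw [hρdef]
      have : 0 < C1 * c2 + 1 := by positivity
      positivity
    obtain ⟨δρ, hδρ, hmodρ⟩ := hmod ρ hρpos
    obtain ⟨rW, hrW, hrWball⟩ := Metric.isOpen_iff.1 hW y hy
    rw [Metric.eventually_nhds_iff]
    refine ⟨min (min (rW/2) δ₀) (δρ/C1), by positivity, ?_⟩
    intro h hh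
    rw [dist_zero_right] at hh
    set x := y + h with hxdef
    have hxy : x - y = h := by rw [hxdef]; abel
    have hnorm : dist x y = ‖h‖ := by rw [dist_eq_norm, hxy]
    have hdist : dist x y < min (min (rW/2) δ₀) (δρ/C1) := by rw [hnorm]; exact hh
    have hxW : x ∈ W := by
      apply hrWball
      rw [Metric.mem_ball]
      have h1 : dist x y < rW/2 :=
        lt_of_lt_of_le hdist (le_trans (min_le_left _ _) (min_le_left _ _))
      linarith
    have hxδ₀ : dist x y ≤ δ₀ :=
      le_of_lt (lt_of_lt_of_le hdist (le_trans (min_le_left _ _) (min_le_right _ _)))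
    have hxδρ : dist x y * C1 ≤ δρ := by
      have h1 : dist x y < δρ/C1 := lt_of_lt_of_le hdist (min_le_right _ _)
      calc dist x y * C1 ≤ (δρ/C1) * C1 :=
            mul_le_mul_of_nonneg_right (le_of_lt h1) (le_of_lt hC1pos)
        _ = δρ := div_mul_cancel₀ _ (ne_of_gt hC1pos)
    obtain ⟨LM, hLM⟩ : ∃ Lc : (Fin n → Fin n → ℝ) →L[ℝ] (Fin n → ℝ),
        ∀ M, Lc M = mV M (x - y) := by
      refine ⟨LinearMap.toContinuousLinearMap
        { toFun := fun M => mV M (x - y)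
          map_add' := by
            intro P Q; funext i
            simp [mV, add_mul, Finset.sum_add_distrib]
          map_smul' := by
            intro cc P; funext i
            simp only [mV, RingHom.id_apply, Pi.smul_apply, smul_eq_mul]
            rw [Finset.mul_sum]
            exact Finset.sum_congr rfl fun j _ => by ring }, fun M => rfl⟩
    set R : ℝ → (Fin n → ℝ) := fun s => φ s x - φ s y - mV (J s) (x - y) with hRdef
    have hR0 : R 0 = 0 := by
      funext i
      show (φ 0 x - φ 0 y - mV (J 0) (x - y)) i = 0
      rw [hφ0 x hxW, hφ0 y hy, hJ0]
      simp [mV, ite_mul, Finset.sum_ite_eq, Finset.mem_univ]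
    set Efn : ℝ → (Fin n → ℝ) :=
      fun s => f (φ s x) - f (φ s y) - mV (Ay s) (φ s x - φ s y) with hEdef
    have hRd : ∀ s ∈ Set.Icc 0 t, HasDerivAt R (mV (Ay s) (R s) + Efn s) s := by
      intro s hs
      have hJv : HasDerivAt (fun s => mV (J s) (x - y)) (mV (mM (Ay s) (J s)) (x - y)) s := by
        have h1 := LM.hasFDerivAt.comp_hasDerivAt s (hJd' s hs)
        rw [show (fun s : ℝ => mV (J s) (x - y)) = ⇑LM ∘ J from
          funext fun s => (hLM (J s)).symm, ← hLM]
        exact h1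
      have h2 := ((hflow x hxW s hs).sub (hflow y hy s hs)).sub hJv
      convert h2 using 1
      show mV (Ay s) (R s) + Efn s = f (φ s x) - f (φ s y) - mV (mM (Ay s) (J s)) (x - y)
      rw [hEdef]
      simp only
      rw [show R s = φ s x - φ s y - mV (J s) (x - y) from rfl, mV_sub, mV_mM]
      abel
      all_goals rfl
    have hRc : ContinuousOn R (Set.Icc 0 t) := by
      have h3 : Continuous (fun s => mV (J s) (x - y)) := by
        rw [show (fun s : ℝ => mV (J s) (x - y)) = ⇑LM ∘ J from
          funext fun s => (hLM (J s)).symm]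
        exact LM.continuous.comp hJcont
      exact (((htraj_cont x hxW).sub (htraj_cont y hy)).sub h3.continuousOn)
    have hEb : ∀ s ∈ Set.Ico 0 t,
        ‖mV (Ay s) (R s) + Efn s‖ ≤ KG * ‖R s‖ + ρ * (C1 * dist x y) := by
      intro s hs
      have hsI : s ∈ Set.Icc 0 t := ⟨hs.1, le_of_lt hs.2⟩
      have hzU : φ s y ∈ U := hKU (hφsyK s hsI)
      have hxK1 : φ s x ∈ K1 := hboot x hxW hxδ₀ s hsI
      have hAyjac : Ay s = fun i j => jac f (φ s y) i j := by
        rw [hAydef]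
        simp only
        rw [hproj_id s hsI]
      have hE : ‖Efn s‖ ≤ ρ * (C1 * dist x y) := by
        have hFb : F (φ s y) (φ s x - φ s y) = mV (Ay s) (φ s x - φ s y) := by
          rw [hFmV _ hzU, hAyjac]
        have hd' : ‖φ s x - φ s y‖ ≤ δρ := by
          rw [← dist_eq_norm]
          exact le_trans (le_trans (hest x hxW hxδ₀ s hsI) (le_refl _)) hxδρ
        have hmo := hmodρ (φ s y) (hφsyK s hsI) (φ s x) hxK1 hd'
        rw [hFb] at hmo
        refine le_trans hmo ?_
        have h2 : ‖φ s x - φ s y‖ ≤ C1 * dist x y := by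
          rw [← dist_eq_norm]
          have h3 := hest x hxW hxδ₀ s hsI
          linarith [h3, mul_comm (dist x y) C1]
        exact mul_le_mul_of_nonneg_left h2 (le_of_lt hρpos)
      have hA : ‖mV (Ay s) (R s)‖ ≤ KG * ‖R s‖ :=
        (mV_norm_le (le_of_lt hCApos) (hAy_entry s) (R s)).trans
          (mul_le_mul_of_nonneg_right hnCA_KG (norm_nonneg _))
      exact (norm_add_le _ _).trans (add_le_add hA hE)
    have hgron := norm_le_gronwallBound_of_norm_deriv_right_le (δ := 0) (K := KG)
      (ε := ρ * (C1 * dist x y)) (a := 0) (b := t) hRc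
      (fun s hs => (hRd s ⟨hs.1, le_of_lt hs.2⟩).hasDerivWithinAt)
      (by rw [hR0]; simp) hEb t ⟨ht, le_refl t⟩
    have hfinal : ‖R t‖ ≤ c * ‖h‖ := by
      have hval : gronwallBound 0 KG (ρ * (C1 * dist x y)) (t - 0)
          ≤ ρ * (C1 * c2) * dist x y := by
        rw [gronwallBound_of_K_ne_0 (ne_of_gt hKGpos), sub_zero]
        have h1 : Real.exp (KG*t) - 1 ≤ Real.exp (KG*t) := by linarith
        have h2 : (0:ℝ) ≤ ρ*(C1* dist x y)/KG := by positivity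
        calc 0 * Real.exp (KG * t) + ρ*(C1*dist x y)/KG * (Real.exp (KG*t) - 1)
            = ρ*(C1*dist x y)/KG * (Real.exp (KG*t) - 1) := by ring
          _ ≤ ρ*(C1*dist x y)/KG * Real.exp (KG*t) := mul_le_mul_of_nonneg_left h1 h2
          _ = ρ * (C1 * c2) * dist x y := by
              rw [hc2def]
              field_simp
      have hρc : ρ * (C1 * c2) ≤ c := by
        rw [hρdef, div_mul_eq_mul_div, div_le_iff₀ (by positivity)]
        nlinarith [hc, hc2pos, hC1pos]
      calc ‖R t‖ ≤ gronwallBound 0 KG (ρ * (C1 * dist x y)) (t - 0) := hgron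
        _ ≤ ρ * (C1 * c2) * dist x y := hval
        _ ≤ c * dist x y := mul_le_mul_of_nonneg_right hρc dist_nonneg
        _ = c * ‖h‖ := by rw [hnorm]
    calc ‖φ t (y + h) - φ t y - Dclm h‖ = ‖R t‖ := by
          rw [hDclm, show R t = φ t x - φ t y - mV (J t) (x - y) from rfl, hxy, hxdef]
      _ ≤ c * ‖h‖ := hfinal
  have hjacJ : ∀ i j, jac (φ t) y i j = J t i j := by
    intro i j
    have hDi : HasFDerivAt (fun x => φ t x i) ((ContinuousLinearMap.proj i).comp Dclm) y :=
      (((ContinuousLinearMap.proj i) : (Fin n → ℝ) →L[ℝ] ℝ).hasFDerivAt.comp y hDer :)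
    show pd (fun x => φ t x i) y j = J t i j
    unfold pd
    rw [hDi.fderiv]
    show (Dclm (Pi.single j 1)) i = J t i j
    rw [hDclm]
    simp [mV, Pi.single_apply, mul_ite, mul_one, mul_zero, Finset.sum_ite_eq',
      Finset.mem_univ]
  -- the quadratic invariant
  have hMzero : (fun i k => (∑ p, ∑ q, J t i p * B y p q * J t k q) - B (φ t y) i k)
      = (fun _ _ => (0:ℝ)) := by
    set N : ℝ → (Fin n → Fin n → ℝ) := fun s =>
      (fun i k => (∑ p, ∑ q, J s i p * B y p q * J s k q) - B (φ (proj s) y) i k) with hNdef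
    have hN0 : N 0 = 0 := by
      funext i k
      show (∑ p, ∑ q, J 0 i p * B y p q * J 0 k q) - B (φ (proj 0) y) i k = 0
      rw [hproj_id 0 h0t, hφ0 y hy, hJ0]
      have hsum : (∑ p, ∑ q, (if i = p then (1:ℝ) else 0) * B y p q
          * (if k = q then (1:ℝ) else 0)) = B y i k := by
        simp only [ite_mul, one_mul, zero_mul, mul_ite, mul_one, mul_zero]
        simp [Finset.sum_ite_eq, Finset.mem_univ]
      rw [hsum, sub_self]
    set Dfn : ℝ → (Fin n → Fin n → ℝ) := fun s =>
      mM (Ay s) (N s) + (fun i k => ∑ l, N s i l * Ay s k l) with hDfndef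
    have hNd : ∀ s ∈ Set.Ico 0 t, HasDerivWithinAt N (Dfn s) (Set.Ici s) s := by
      intro s hs
      have hsI : s ∈ Set.Icc 0 t := ⟨hs.1, le_of_lt hs.2⟩
      have hzU : φ s y ∈ U := hKU (hφsyK s hsI)
      have hAyjac : Ay s = fun i j => jac f (φ s y) i j := by
        rw [hAydef]; simp only; rw [hproj_id s hsI]
      set N' : ℝ → (Fin n → Fin n → ℝ) := fun r =>
        (fun i k => (∑ p, ∑ q, J r i p * B y p q * J r k q) - B (φ r y) i k) with hN'def
      have hEq : ∀ r ∈ Set.Icc 0 t, N r = N' r := by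
        intro r hr
        funext i k
        show _ - B (φ (proj r) y) i k = _ - B (φ r y) i k
        rw [hproj_id r hr]
      have hJe : ∀ i p, HasDerivAt (fun r => J r i p) (mM (Ay s) (J s) i p) s := by
        intro i p
        exact (hasDerivAt_pi.1 ((hasDerivAt_pi.1 (hJd' s hsI)) i)) p
      have hBe : ∀ i k, HasDerivAt (fun r => B (φ r y) i k)
          (∑ l, pvf B H (φ s y) l * pd (fun x => B x i k) (φ s y) l) s := by
        intro i k
        exact hasDerivAt_comp_pd (diffb' hU hBsmooth hH hzU i k) (hflow y hy s hsI)
      set D0 : Fin n → Fin n → ℝ := fun i k =>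
        (∑ p, ∑ q, (mM (Ay s) (J s) i p * B y p q * J s k q
          + J s i p * B y p q * mM (Ay s) (J s) k q))
        - ∑ l, pvf B H (φ s y) l * pd (fun x => B x i k) (φ s y) l with hD0def
      have hN'd : HasDerivAt N' D0 s := by
        apply hasDerivAt_pi.2; intro i; apply hasDerivAt_pi.2; intro k
        apply HasDerivAt.sub ?_ (hBe i k)
        apply HasDerivAt.fun_sum; intro p _
        apply HasDerivAt.fun_sum; intro q _
        have h1 := ((hJe i p).mul_const (B y p q)).mul (hJe k q)
        convert h1 using 1
        all_goals rfl
      have hD0eq : D0 = Dfn s := by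
        funext i k
        have hkey := keyid hU hBsmooth hskew hjacobi hH hzU i k
        have hAyent : ∀ a b, Ay s a b = jac (pvf B H) (φ s y) a b := by
          intro a b
          rw [hAyjac]
        have hS1 : (∑ p, ∑ q, mM (Ay s) (J s) i p * B y p q * J s k q)
            = ∑ l, Ay s i l * (∑ p, ∑ q, J s l p * B y p q * J s k q) := by
          have e1 : ∀ p q, mM (Ay s) (J s) i p * B y p q * J s k q
              = ∑ l, Ay s i l * (J s l p * B y p q * J s k q) := by
            intro p q
            show (∑ l, Ay s i l * J s l p) * B y p q * J s k q = _
            rw [Finset.sum_mul, Finset.sum_mul]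
            exact Finset.sum_congr rfl fun l _ => by ring
          calc (∑ p, ∑ q, mM (Ay s) (J s) i p * B y p q * J s k q)
              = ∑ p, ∑ q, ∑ l, Ay s i l * (J s l p * B y p q * J s k q) := by
                exact Finset.sum_congr rfl fun p _ => Finset.sum_congr rfl fun q _ => e1 p q
            _ = ∑ p, ∑ l, ∑ q, Ay s i l * (J s l p * B y p q * J s k q) :=
                Finset.sum_congr rfl fun p _ => Finset.sum_comm
            _ = ∑ l, ∑ p, ∑ q, Ay s i l * (J s l p * B y p q * J s k q) := Finset.sum_comm
            _ = ∑ l, Ay s i l * (∑ p, ∑ q, J s l p * B y p q * J s k q) := by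
                refine Finset.sum_congr rfl fun l _ => ?_
                rw [Finset.mul_sum]
                exact Finset.sum_congr rfl fun p _ => by rw [Finset.mul_sum]
        have hS2 : (∑ p, ∑ q, J s i p * B y p q * mM (Ay s) (J s) k q)
            = ∑ l, (∑ p, ∑ q, J s i p * B y p q * J s l q) * Ay s k l := by
          have e1 : ∀ p q, J s i p * B y p q * mM (Ay s) (J s) k q
              = ∑ l, (J s i p * B y p q * J s l q) * Ay s k l := by
            intro p q
            show J s i p * B y p q * (∑ l, Ay s k l * J s l q) = _
            rw [Finset.mul_sum]
            exact Finset.sum_congr rfl fun l _ => by ring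
          calc (∑ p, ∑ q, J s i p * B y p q * mM (Ay s) (J s) k q)
              = ∑ p, ∑ q, ∑ l, (J s i p * B y p q * J s l q) * Ay s k l := by
                exact Finset.sum_congr rfl fun p _ => Finset.sum_congr rfl fun q _ => e1 p q
            _ = ∑ p, ∑ l, ∑ q, (J s i p * B y p q * J s l q) * Ay s k l :=
                Finset.sum_congr rfl fun p _ => Finset.sum_comm
            _ = ∑ l, ∑ p, ∑ q, (J s i p * B y p q * J s l q) * Ay s k l := Finset.sum_comm
            _ = ∑ l, (∑ p, ∑ q, J s i p * B y p q * J s l q) * Ay s k l := by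
                refine Finset.sum_congr rfl fun l _ => ?_
                rw [Finset.sum_mul]
                exact Finset.sum_congr rfl fun p _ => by rw [Finset.sum_mul]
        have hQd : (∑ l, pvf B H (φ s y) l * pd (fun x => B x i k) (φ s y) l)
            = ∑ l, Ay s i l * B (φ s y) l k + ∑ l, B (φ s y) i l * Ay s k l := by
          rw [hkey]
          congr 1
          · exact Finset.sum_congr rfl fun l _ => by rw [hAyent i l]
          · exact Finset.sum_congr rfl fun l _ => by rw [hAyent k l]
        show (∑ p, ∑ q, (mM (Ay s) (J s) i p * B y p q * J s k q
            + J s i p * B y p q * mM (Ay s) (J s) k q))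
            - (∑ l, pvf B H (φ s y) l * pd (fun x => B x i k) (φ s y) l)
            = mM (Ay s) (N s) i k + (∑ l, N s i l * Ay s k l)
        have hsplit : (∑ p, ∑ q, (mM (Ay s) (J s) i p * B y p q * J s k q
            + J s i p * B y p q * mM (Ay s) (J s) k q))
            = (∑ p, ∑ q, mM (Ay s) (J s) i p * B y p q * J s k q)
              + (∑ p, ∑ q, J s i p * B y p q * mM (Ay s) (J s) k q) := by
          rw [← Finset.sum_add_distrib]
          exact Finset.sum_congr rfl fun p _ => by rw [← Finset.sum_add_distrib]
        have hNs : ∀ a b, N s a b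
            = (∑ p, ∑ q, J s a p * B y p q * J s b q) - B (φ s y) a b := by
          intro a b
          show (∑ p, ∑ q, J s a p * B y p q * J s b q) - B (φ (proj s) y) a b = _
          rw [hproj_id s hsI]
        have hRHS1 : mM (Ay s) (N s) i k
            = (∑ l, Ay s i l * (∑ p, ∑ q, J s l p * B y p q * J s k q))
              - ∑ l, Ay s i l * B (φ s y) l k := by
          show (∑ l, Ay s i l * N s l k) = _
          rw [← Finset.sum_sub_distrib]
          exact Finset.sum_congr rfl fun l _ => by rw [hNs l k]; ring
        have hRHS2 : (∑ l, N s i l * Ay s k l)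
            = (∑ l, (∑ p, ∑ q, J s i p * B y p q * J s l q) * Ay s k l)
              - ∑ l, B (φ s y) i l * Ay s k l := by
          rw [← Finset.sum_sub_distrib]
          exact Finset.sum_congr rfl fun l _ => by rw [hNs i l]; ring
        rw [hsplit, hS1, hS2, hQd, hRHS1, hRHS2]
        ring
      have hIcoMem : Set.Ico s t ∈ nhdsWithin s (Set.Ici s) := by
        rw [← Set.Ici_inter_Iio]
        exact Filter.inter_mem self_mem_nhdsWithin
          (mem_nhdsWithin_of_mem_nhds (Iio_mem_nhds hs.2))
      have hev : N =ᶠ[nhdsWithin s (Set.Ici s)] N' := by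
        filter_upwards [hIcoMem] with r hr
        exact hEq r ⟨le_trans hs.1 hr.1, le_of_lt hr.2⟩
      have hfin := (hN'd.hasDerivWithinAt (s := Set.Ici s)).congr_of_eventuallyEq hev
        (hEq s hsI)
      rwa [hD0eq] at hfin
    have hNc : ContinuousOn N (Set.Icc 0 t) := by
      refine continuousOn_pi.2 fun i => continuousOn_pi.2 fun k => ContinuousOn.sub ?_ ?_
      · apply Continuous.continuousOn
        refine continuous_finset_sum _ fun p _ => continuous_finset_sum _ fun q _ => ?_
        exact (((continuous_apply p).comp ((continuous_apply i).comp hJcont)).mul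
          continuous_const).mul ((continuous_apply q).comp ((continuous_apply k).comp hJcont))
      · apply Continuous.continuousOn
        exact ((hBsmooth i k).continuousOn).comp_continuous
          ((htraj_cont y hy).comp_continuous hproj_cont hproj_mem)
          (fun s => hKU (htrajK s))
    have hNb : ∀ s ∈ Set.Ico 0 t, ‖Dfn s‖ ≤ (2*KG) * ‖N s‖ + 0 := by
      intro s _
      have h1 : ‖mM (Ay s) (N s)‖ ≤ KG * ‖N s‖ :=
        (mM_norm_le (le_of_lt hCApos) (hAy_entry s)).trans
          (mul_le_mul_of_nonneg_right hnCA_KG (norm_nonneg _))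
      have h2 : ‖(fun i k => ∑ l, N s i l * Ay s k l : Fin n → Fin n → ℝ)‖ ≤ KG * ‖N s‖ :=
        (mMt_norm_le (le_of_lt hCApos) (hAy_entry s)).trans
          (mul_le_mul_of_nonneg_right hnCA_KG (norm_nonneg _))
      calc ‖Dfn s‖ ≤ ‖mM (Ay s) (N s)‖
            + ‖(fun i k => ∑ l, N s i l * Ay s k l : Fin n → Fin n → ℝ)‖ := norm_add_le _ _
        _ ≤ (2*KG) * ‖N s‖ + 0 := by linarith
    have hgr := norm_le_gronwallBound_of_norm_deriv_right_le (δ := 0) (K := 2*KG) (ε := 0)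
      (a := 0) (b := t) hNc hNd (by rw [hN0]; simp) hNb t ⟨ht, le_refl t⟩
    have hNt0 : ‖N t‖ ≤ 0 := by
      simpa [gronwallBound_ε0] using hgr
    have hNt : N t = 0 := norm_le_zero_iff.1 hNt0
    have hNtapp : ∀ i k, (∑ p, ∑ q, J t i p * B y p q * J t k q)
        - B (φ (proj t) y) i k = 0 := by
      intro i k
      exact congrFun (congrFun hNt i) k
    funext i k
    have := hNtapp i k
    rwa [hproj_id t ⟨ht, le_refl t⟩] at this
  -- conclusion
  have hMt : ∀ i k, (∑ p, ∑ q, J t i p * B y p q * J t k q) = B (φ t y) i k := by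
    intro i k
    have := congrFun (congrFun hMzero i) k
    simpa [sub_eq_zero] using this
  funext i k
  show (jac (φ t) y * B y * (jac (φ t) y)ᵀ) i k = B (φ t y) i k
  rw [Matrix.mul_apply]
  have : ∀ q, (jac (φ t) y * B y) i q * (jac (φ t) y)ᵀ q k
      = ∑ p, J t i p * B y p q * J t k q := by
    intro q
    rw [Matrix.mul_apply, Matrix.transpose_apply, Finset.sum_mul]
    exact Finset.sum_congr rfl fun p _ => by rw [hjacJ i p, hjacJ k q]
  rw [Finset.sum_congr rfl fun q _ => this q, Finset.sum_comm]
  exact hMt i k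

end S7

/-- the phase flow `φ_t` of a Poisson system `ẏ = B(y)∇H(y)` is a Poisson map:
if the flow `φ` is defined (with values in `U`) on an open set `W ⊆ U` for all times between
`0` and `t`, then `(∂φ_t/∂y)(y) B(y) (∂φ_t/∂y)(y)ᵀ = B(φ_t(y))` for every `y ∈ W`. -/
theorem statement_7 {n : ℕ} (U : Set (Fin n → ℝ)) (hU : IsOpen U)
    (B : (Fin n → ℝ) → Matrix (Fin n) (Fin n) ℝ)
    (hBsmooth : ∀ i j, ContDiffOn ℝ (⊤ : ℕ∞) (fun y => B y i j) U)
    (hskew : ∀ y ∈ U, ∀ i j, B y i j = - B y j i)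
    (hjacobi : ∀ y ∈ U, ∀ i j k : Fin n,
        ∑ l, (pd (fun x => B x i j) y l * B y l k
            + pd (fun x => B x j k) y l * B y l i
            + pd (fun x => B x k i) y l * B y l j) = 0)
    (H : (Fin n → ℝ) → ℝ) (hH : ContDiffOn ℝ (⊤ : ℕ∞) H U)
    (φ : ℝ → (Fin n → ℝ) → (Fin n → ℝ)) (t : ℝ)
    (W : Set (Fin n → ℝ)) (hW : IsOpen W) (hWU : W ⊆ U)
    (hmem : ∀ s ∈ Set.uIcc 0 t, ∀ y ∈ W, φ s y ∈ U)
    (hφ0 : ∀ y ∈ W, φ 0 y = y)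
    (hflow : ∀ y ∈ W, ∀ s ∈ Set.uIcc 0 t,
      HasDerivAt (fun r => φ r y) ((B (φ s y)).mulVec (grad H (φ s y))) s) :
    ∀ y ∈ W, jac (φ t) y * B y * (jac (φ t) y)ᵀ = B (φ t y) := by
  rcases le_or_gt 0 t with ht | ht
  · have hIcc : Set.uIcc (0:ℝ) t = Set.Icc 0 t := Set.uIcc_of_le ht
    exact S7.aux U hU B hBsmooth hskew hjacobi H hH φ t ht W hW hWU
      (fun s hs => hmem s (hIcc ▸ hs)) hφ0
      (fun y hy s hs => hflow y hy s (hIcc ▸ hs))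
  · -- time reversal
    have ht' : (0:ℝ) ≤ -t := by linarith
    have hIcc : Set.uIcc (0:ℝ) t = Set.Icc t 0 := Set.uIcc_of_ge (le_of_lt ht)
    have hBneg : ∀ (i j : Fin n), ContDiffOn ℝ (⊤ : ℕ∞) (fun z => (-B z) i j) U := by
      intro i j
      have : (fun z => (-B z) i j) = fun z => -(B z i j) := by
        funext z; simp [Matrix.neg_apply]
      rw [this]
      exact (hBsmooth i j).neg
    have hskew' : ∀ z ∈ U, ∀ i j, (-B z) i j = -((-B z) j i) := by
      intro z hz i j
      simp only [Matrix.neg_apply, neg_neg]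
      rw [hskew z hz i j]
      ring
    have hpdneg : ∀ (a b : Fin n) (z : Fin n → ℝ) (l : Fin n),
        pd (fun x => (-B x) a b) z l = - pd (fun x => B x a b) z l := by
      intro a b z l
      have h1 : (fun x => (-B x) a b) = fun x => -(B x a b) := by
        funext x; simp [Matrix.neg_apply]
      rw [h1]
      show fderiv ℝ (fun x => -(B x a b)) z (Pi.single l 1) = _
      rw [fderiv_fun_neg]
      simp [pd]
    have hjacobi' : ∀ z ∈ U, ∀ i j k : Fin n,
        ∑ l, (pd (fun x => (-B x) i j) z l * (-B z) l k
            + pd (fun x => (-B x) j k) z l * (-B z) l i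
            + pd (fun x => (-B x) k i) z l * (-B z) l j) = 0 := by
      intro z hz i j k
      have hcongr : ∀ l : Fin n, pd (fun x => (-B x) i j) z l * (-B z) l k
            + pd (fun x => (-B x) j k) z l * (-B z) l i
            + pd (fun x => (-B x) k i) z l * (-B z) l j
          = pd (fun x => B x i j) z l * B z l k
            + pd (fun x => B x j k) z l * B z l i
            + pd (fun x => B x k i) z l * B z l j := by
        intro l
        rw [hpdneg i j z l, hpdneg j k z l, hpdneg k i z l]
        simp only [Matrix.neg_apply]
        ring
      rw [Finset.sum_congr rfl fun l _ => hcongr l]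
      exact hjacobi z hz i j k
    have hmem' : ∀ s ∈ Set.Icc 0 (-t), ∀ x ∈ W, φ (-s) x ∈ U := by
      intro s hs x hx
      refine hmem (-s) ?_ x hx
      rw [hIcc]
      exact ⟨by linarith [hs.2], by linarith [hs.1]⟩
    have hφ0' : ∀ x ∈ W, φ (-0) x = x := by
      intro x hx
      rw [neg_zero]
      exact hφ0 x hx
    have hflow' : ∀ x ∈ W, ∀ s ∈ Set.Icc 0 (-t),
        HasDerivAt (fun r => φ (-r) x) (S7.pvf (fun z => -B z) H (φ (-s) x)) s := by
      intro x hx s hs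
      have hsmem : -s ∈ Set.uIcc 0 t := by
        rw [hIcc]
        exact ⟨by linarith [hs.2], by linarith [hs.1]⟩
      have h1 := hflow x hx (-s) hsmem
      have h2 := h1.scomp s (hasDerivAt_neg s)
      have h3 : ((-1:ℝ) • (B (φ (-s) x)).mulVec (grad H (φ (-s) x)))
          = S7.pvf (fun z => -B z) H (φ (-s) x) := by
        show _ = (-B (φ (-s) x)).mulVec (grad H (φ (-s) x))
        rw [Matrix.neg_mulVec, neg_one_smul]
      rw [h3] at h2
      exact h2
    have key := S7.aux U hU (fun z => -B z) hBneg hskew' hjacobi' H hH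
      (fun s x => φ (-s) x) (-t) ht' W hW hWU hmem' hφ0' hflow'
    intro y hy
    have h2 := key y hy
    simp only [neg_neg] at h2
    have h3 := h2
    rw [Matrix.mul_neg, Matrix.neg_mul] at h3
    exact neg_injective h3
end

section
/- Let d, l be positive integers, σ : ℝ → ℝ a differentiable function, K ∈ ℝ^{l×d}, and a, b ∈ ℝ^l. Then the gradient module G_up : ℝ^{2d} → ℝ^{2d} defined by G_up(p, q) = (p + Kᵀ(a ⊙ σ(Kq + b)), q), where σ is applied componentwise and ⊙ denotes the elementwise product, is a symplectic map: its Jacobian M satisfies Mᵀ J M = J. The same holds for the lower module G_low(p, q) = (p, Kᵀ(a ⊙ σ(Kp + b)) + q). -/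
open Matrix

/-- The canonical `2d × 2d` symplectic matrix `J = ((0, I_d), (-I_d, 0))`. -/
def Jmat (d : ℕ) : Matrix (Fin (2*d)) (Fin (2*d)) ℝ := fun i j =>
  if (i:ℕ) < d ∧ (j:ℕ) = (i:ℕ) + d then 1
  else if (j:ℕ) < d ∧ (i:ℕ) = (j:ℕ) + d then -1
  else 0

/-- The map `u ↦ Kᵀ(a ⊙ σ(Ku + b))`, where `σ` acts componentwise and `⊙` is the
elementwise product. -/
noncomputable def gradMod {d l : ℕ} (σ : ℝ → ℝ) (K : Matrix (Fin l) (Fin d) ℝ)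
    (a b : Fin l → ℝ) (u : Fin d → ℝ) : Fin d → ℝ :=
  fun i => ∑ r, K r i * (a r * σ ((∑ s, K r s * u s) + b r))

/-- The upper gradient module `G_up(p, q) = (p + Kᵀ(a ⊙ σ(Kq + b)), q)` on `ℝ^{2d}`,
where the coordinates `< d` are `p` and the coordinates `≥ d` are `q`. -/
noncomputable def Gup {d l : ℕ} (σ : ℝ → ℝ) (K : Matrix (Fin l) (Fin d) ℝ)
    (a b : Fin l → ℝ) (x : Fin (2*d) → ℝ) : Fin (2*d) → ℝ :=
  fun i => if h : (i:ℕ) < d then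
      x i + gradMod σ K a b (fun s : Fin d => x ⟨(s:ℕ) + d, by have := s.isLt; omega⟩) ⟨i, h⟩
    else x i

/-- The lower gradient module `G_low(p, q) = (p, Kᵀ(a ⊙ σ(Kp + b)) + q)` on `ℝ^{2d}`. -/
noncomputable def Glow {d l : ℕ} (σ : ℝ → ℝ) (K : Matrix (Fin l) (Fin d) ℝ)
    (a b : Fin l → ℝ) (x : Fin (2*d) → ℝ) : Fin (2*d) → ℝ :=
  fun i => if h : (i:ℕ) < d then x i
    else x i + gradMod σ K a b (fun s : Fin d => x ⟨(s:ℕ), by have := s.isLt; omega⟩)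
      ⟨(i:ℕ) - d, by have := i.isLt; omega⟩

/-! ### Auxiliary definitions -/

/-- the embedding of the `q`-coordinates -/
def eup (d : ℕ) : Fin d → Fin (2*d) := fun s => ⟨(s:ℕ) + d, by have := s.isLt; omega⟩

/-- the embedding of the `p`-coordinates -/
def elow (d : ℕ) : Fin d → Fin (2*d) := fun s => ⟨(s:ℕ), by have := s.isLt; omega⟩

/-- derivative matrix of `gradMod` -/
noncomputable def Smat {d l : ℕ} (σ : ℝ → ℝ) (K : Matrix (Fin l) (Fin d) ℝ)
    (a b : Fin l → ℝ) (u : Fin d → ℝ) : Matrix (Fin d) (Fin d) ℝ :=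
  fun i j => ∑ r, K r i * a r * deriv σ ((∑ s, K r s * u s) + b r) * K r j

lemma Smat_symm {d l : ℕ} (σ : ℝ → ℝ) (K : Matrix (Fin l) (Fin d) ℝ)
    (a b : Fin l → ℝ) (u : Fin d → ℝ) (i j : Fin d) :
    Smat σ K a b u i j = Smat σ K a b u j i :=
  Finset.sum_congr rfl fun r _ => by ring

/-- derivative (as a continuous linear map) of a component of `gradMod` precomposed with
a coordinate embedding -/
noncomputable def Lmap {d l : ℕ} (σ : ℝ → ℝ) (K : Matrix (Fin l) (Fin d) ℝ)
    (a b : Fin l → ℝ) (e : Fin d → Fin (2*d)) (i : Fin d) (x : Fin (2*d) → ℝ) :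
    (Fin (2*d) → ℝ) →L[ℝ] ℝ :=
  ∑ r, (K r i * a r * deriv σ ((∑ s, K r s * x (e s)) + b r)) •
      (∑ s, K r s • ContinuousLinearMap.proj (R := ℝ) (φ := fun _ : Fin (2*d) => ℝ) (e s))

lemma hasFDerivAt_gradMod {d l : ℕ} {σ : ℝ → ℝ} (hσ : Differentiable ℝ σ)
    (K : Matrix (Fin l) (Fin d) ℝ) (a b : Fin l → ℝ)
    (e : Fin d → Fin (2*d)) (i : Fin d) (x : Fin (2*d) → ℝ) :
    HasFDerivAt (fun y : Fin (2*d) → ℝ => gradMod σ K a b (fun s => y (e s)) i)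
      (Lmap σ K a b e i x) x := by
  unfold gradMod Lmap
  apply HasFDerivAt.fun_sum
  intro r _
  set ℓ : (Fin (2*d) → ℝ) →L[ℝ] ℝ :=
    ∑ s, K r s • ContinuousLinearMap.proj (R := ℝ) (φ := fun _ : Fin (2*d) => ℝ) (e s) with hℓ
  have happ : ∀ v : Fin (2*d) → ℝ, ℓ v = ∑ s, K r s * v (e s) := by
    intro v
    simp [hℓ, ContinuousLinearMap.sum_apply, ContinuousLinearMap.proj_apply, smul_eq_mul]
  have hg : HasFDerivAt (fun y : Fin (2*d) → ℝ => (∑ s, K r s * y (e s)) + b r) ℓ x := by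
    have h1 : HasFDerivAt (fun y : Fin (2*d) → ℝ => ℓ y + b r) ℓ x :=
      ℓ.hasFDerivAt.add_const (b r)
    refine h1.congr_of_eventuallyEq ?_
    filter_upwards with y
    rw [happ]
  have hσ' : HasDerivAt σ (deriv σ ((∑ s, K r s * x (e s)) + b r))
      ((∑ s, K r s * x (e s)) + b r) := (hσ _).hasDerivAt
  have hcomp := HasDerivAt.comp_hasFDerivAt x hσ' hg
  have hfinal := (hcomp.const_mul (a r)).const_mul (K r i)
  simp only [Function.comp] at hfinal
  refine hfinal.congr_fderiv ?_
  rw [smul_smul, smul_smul, mul_assoc]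

lemma Lmap_single {d l : ℕ} (σ : ℝ → ℝ) (K : Matrix (Fin l) (Fin d) ℝ)
    (a b : Fin l → ℝ) (e : Fin d → Fin (2*d)) (i : Fin d) (x : Fin (2*d) → ℝ)
    (j : Fin (2*d)) :
    Lmap σ K a b e i x (Pi.single j 1) =
      ∑ r, K r i * a r * deriv σ ((∑ s, K r s * x (e s)) + b r)
        * (∑ s, K r s * (Pi.single j 1 : Fin (2*d) → ℝ) (e s)) := by
  unfold Lmap
  simp [ContinuousLinearMap.sum_apply, ContinuousLinearMap.proj_apply, smul_eq_mul,
    Finset.mul_sum]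

lemma sum_single_up {d l : ℕ} (K : Matrix (Fin l) (Fin d) ℝ) (r : Fin l) (j : Fin (2*d)) :
    (∑ s : Fin d, K r s * (Pi.single j (1:ℝ) : Fin (2*d) → ℝ) (eup d s))
      = if h : d ≤ (j:ℕ) then K r ⟨(j:ℕ) - d, by have := j.isLt; omega⟩ else 0 := by
  by_cases h : d ≤ (j:ℕ)
  · rw [dif_pos h]
    have hjd : (j:ℕ) - d < d := by have := j.isLt; omega
    rw [Finset.sum_eq_single_of_mem (⟨(j:ℕ) - d, hjd⟩ : Fin d) (Finset.mem_univ _)]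
    · rw [Pi.single_apply, if_pos (by rw [Fin.ext_iff]; show (j:ℕ) - d + d = (j:ℕ); omega),
        mul_one]
    · intro s _ hs
      rw [Pi.single_apply, if_neg, mul_zero]
      intro hEq
      apply hs
      have : (s:ℕ) + d = (j:ℕ) := congrArg Fin.val hEq
      rw [Fin.ext_iff]
      show (s:ℕ) = (j:ℕ) - d
      omega
  · rw [dif_neg h]
    apply Finset.sum_eq_zero
    intro s _
    rw [Pi.single_apply, if_neg, mul_zero]
    intro hEq
    have : (s:ℕ) + d = (j:ℕ) := congrArg Fin.val hEq
    omega

lemma sum_single_low {d l : ℕ} (K : Matrix (Fin l) (Fin d) ℝ) (r : Fin l) (j : Fin (2*d)) :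
    (∑ s : Fin d, K r s * (Pi.single j (1:ℝ) : Fin (2*d) → ℝ) (elow d s))
      = if h : (j:ℕ) < d then K r ⟨(j:ℕ), h⟩ else 0 := by
  by_cases h : (j:ℕ) < d
  · rw [dif_pos h]
    rw [Finset.sum_eq_single_of_mem (⟨(j:ℕ), h⟩ : Fin d) (Finset.mem_univ _)]
    · rw [Pi.single_apply, if_pos (by rw [Fin.ext_iff]; rfl), mul_one]
    · intro s _ hs
      rw [Pi.single_apply, if_neg, mul_zero]
      intro hEq
      apply hs
      have : (s:ℕ) = (j:ℕ) := congrArg Fin.val hEq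
      rw [Fin.ext_iff]
      exact this
  · rw [dif_neg h]
    apply Finset.sum_eq_zero
    intro s _
    rw [Pi.single_apply, if_neg, mul_zero]
    intro hEq
    have : (s:ℕ) = (j:ℕ) := congrArg Fin.val hEq
    have := s.isLt
    omega

/-! ### The block matrices -/

noncomputable def Mup {d : ℕ} (S : Matrix (Fin d) (Fin d) ℝ) :
    Matrix (Fin (2*d)) (Fin (2*d)) ℝ := fun i j =>
  (if i = j then 1 else 0) +
    (if h : (i:ℕ) < d ∧ d ≤ (j:ℕ) then
      S ⟨(i:ℕ), h.1⟩ ⟨(j:ℕ) - d, by have := j.isLt; omega⟩ else 0)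

noncomputable def Mlow {d : ℕ} (S : Matrix (Fin d) (Fin d) ℝ) :
    Matrix (Fin (2*d)) (Fin (2*d)) ℝ := fun i j =>
  (if i = j then 1 else 0) +
    (if h : d ≤ (i:ℕ) ∧ (j:ℕ) < d then
      S ⟨(i:ℕ) - d, by have := i.isLt; omega⟩ ⟨(j:ℕ), h.2⟩ else 0)

lemma Mup_ndrow {d : ℕ} (S : Matrix (Fin d) (Fin d) ℝ) {k i : Fin (2*d)}
    (hk : ¬ (k:ℕ) < d) : Mup S k i = if k = i then 1 else 0 := by
  unfold Mup; rw [dif_neg (fun hc => hk hc.1), add_zero]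

lemma Mup_ndcol {d : ℕ} (S : Matrix (Fin d) (Fin d) ℝ) {k i : Fin (2*d)}
    (hi : ¬ d ≤ (i:ℕ)) : Mup S k i = if k = i then 1 else 0 := by
  unfold Mup; rw [dif_neg (fun hc => hi hc.2), add_zero]

lemma Mup_block {d : ℕ} (S : Matrix (Fin d) (Fin d) ℝ) {k i : Fin (2*d)}
    (hk : (k:ℕ) < d) (hi : d ≤ (i:ℕ)) :
    Mup S k i = S ⟨(k:ℕ), hk⟩ ⟨(i:ℕ) - d, by have := i.isLt; omega⟩ := by
  unfold Mup
  rw [dif_pos ⟨hk, hi⟩, if_neg (by intro hEq; have := congrArg Fin.val hEq; omega), zero_add]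

lemma Mlow_nrow {d : ℕ} (S : Matrix (Fin d) (Fin d) ℝ) {k i : Fin (2*d)}
    (hk : (k:ℕ) < d) : Mlow S k i = if k = i then 1 else 0 := by
  unfold Mlow; rw [dif_neg (fun hc => by omega), add_zero]

lemma Mlow_ndcol {d : ℕ} (S : Matrix (Fin d) (Fin d) ℝ) {k i : Fin (2*d)}
    (hi : d ≤ (i:ℕ)) : Mlow S k i = if k = i then 1 else 0 := by
  unfold Mlow; rw [dif_neg (fun hc => by omega), add_zero]

lemma Mlow_block {d : ℕ} (S : Matrix (Fin d) (Fin d) ℝ) {k i : Fin (2*d)}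
    (hk : d ≤ (k:ℕ)) (hi : (i:ℕ) < d) :
    Mlow S k i = S ⟨(k:ℕ) - d, by have := k.isLt; omega⟩ ⟨(i:ℕ), hi⟩ := by
  unfold Mlow
  rw [dif_pos ⟨hk, hi⟩, if_neg (by intro hEq; have := congrArg Fin.val hEq; omega), zero_add]

/-! ### The key linear-algebra computation -/

lemma Jsum {d : ℕ} (f : Fin (2*d) → ℝ) (m : Fin (2*d)) :
    ∑ k, f k * Jmat d k m =
      if h : (m:ℕ) < d then -f ⟨(m:ℕ) + d, by have := m.isLt; omega⟩
      else f ⟨(m:ℕ) - d, by have := m.isLt; omega⟩ := by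
  by_cases h : (m:ℕ) < d
  · rw [dif_pos h]
    have hm : (m:ℕ) + d < 2*d := by omega
    rw [Finset.sum_eq_single_of_mem (⟨(m:ℕ) + d, hm⟩ : Fin (2*d)) (Finset.mem_univ _)]
    · have hJ : Jmat d ⟨(m:ℕ) + d, hm⟩ m = -1 := by
        unfold Jmat
        have hc1 : ¬ (((⟨(m:ℕ) + d, hm⟩ : Fin (2*d)) : ℕ) < d
            ∧ (m:ℕ) = ((⟨(m:ℕ) + d, hm⟩ : Fin (2*d)) : ℕ) + d) := by
          simp only [Fin.val_mk]; omega
        have hc2 : ((m:ℕ) < d ∧ ((⟨(m:ℕ) + d, hm⟩ : Fin (2*d)) : ℕ) = (m:ℕ) + d) :=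
          ⟨h, rfl⟩
        rw [if_neg hc1, if_pos hc2]
      rw [hJ]; ring
    · intro k _ hk
      have hJ : Jmat d k m = 0 := by
        unfold Jmat
        have hc2 : ¬ ((m:ℕ) < d ∧ (k:ℕ) = (m:ℕ) + d) := by
          rintro ⟨_, hc⟩
          exact hk (Fin.val_injective hc)
        have hc1 : ¬ ((k:ℕ) < d ∧ (m:ℕ) = (k:ℕ) + d) := by rintro ⟨h1, h2⟩; omega
        rw [if_neg hc1, if_neg hc2]
      rw [hJ, mul_zero]
  · rw [dif_neg h]
    have hm : (m:ℕ) - d < 2*d := by have := m.isLt; omega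
    rw [Finset.sum_eq_single_of_mem (⟨(m:ℕ) - d, hm⟩ : Fin (2*d)) (Finset.mem_univ _)]
    · have hJ : Jmat d ⟨(m:ℕ) - d, hm⟩ m = 1 := by
        unfold Jmat
        have hc1 : (((⟨(m:ℕ) - d, hm⟩ : Fin (2*d)) : ℕ) < d
            ∧ (m:ℕ) = ((⟨(m:ℕ) - d, hm⟩ : Fin (2*d)) : ℕ) + d) := by
          simp only [Fin.val_mk]; have := m.isLt; omega
        rw [if_pos hc1]
      rw [hJ, mul_one]
    · intro k _ hk
      have hJ : Jmat d k m = 0 := by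
        unfold Jmat
        have hc1 : ¬ ((k:ℕ) < d ∧ (m:ℕ) = (k:ℕ) + d) := by
          rintro ⟨h1, h2⟩
          exact hk (Fin.val_injective (show (k:ℕ) = (m:ℕ) - d by omega))
        have hc2 : ¬ ((m:ℕ) < d ∧ (k:ℕ) = (m:ℕ) + d) := by rintro ⟨h1, _⟩; omega
        rw [if_neg hc1, if_neg hc2]
      rw [hJ, mul_zero]

lemma prod_step {d : ℕ} (M : Matrix (Fin (2*d)) (Fin (2*d)) ℝ) (i j : Fin (2*d)) :
    (Mᵀ * Jmat d * M) i j =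
      ∑ m : Fin (2*d),
        (if h : (m:ℕ) < d then -(M ⟨(m:ℕ) + d, by have := m.isLt; omega⟩ i)
            else M ⟨(m:ℕ) - d, by have := m.isLt; omega⟩ i) * M m j := by
  rw [Matrix.mul_apply]
  refine Finset.sum_congr rfl fun m _ => ?_
  rw [Matrix.mul_apply]
  congr 1
  simpa only [Matrix.transpose_apply] using Jsum (fun k => M k i) m

lemma Jmat_eval {d : ℕ} (i j : Fin (2*d)) :
    Jmat d i j = if (i:ℕ) < d ∧ (j:ℕ) = (i:ℕ) + d then 1
      else if (j:ℕ) < d ∧ (i:ℕ) = (j:ℕ) + d then -1 else 0 := rfl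

lemma Jmat_zero {d : ℕ} {i j : Fin (2*d)} (h1 : ¬ ((i:ℕ) < d ∧ (j:ℕ) = (i:ℕ) + d))
    (h2 : ¬ ((j:ℕ) < d ∧ (i:ℕ) = (j:ℕ) + d)) : Jmat d i j = 0 := by
  rw [Jmat_eval, if_neg h1, if_neg h2]

lemma Mup_symp {d : ℕ} (S : Matrix (Fin d) (Fin d) ℝ) (hS : ∀ i j, S i j = S j i) :
    (Mup S)ᵀ * Jmat d * Mup S = Jmat d := by
  ext i j
  rw [prod_step]
  by_cases hi : (i:ℕ) < d <;> by_cases hj : (j:ℕ) < d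
  · -- i < d, j < d : everything vanishes
    rw [Finset.sum_eq_zero, Jmat_zero (by omega) (by omega)]
    intro m _
    by_cases hm : (m:ℕ) < d
    · have h1 : Mup S (⟨(m:ℕ) + d, by have := m.isLt; omega⟩ : Fin (2*d)) i = 0 := by
        rw [Mup_ndcol S (by omega)]
        exact if_neg fun hEq => by
          have := congrArg Fin.val hEq; simp only [Fin.val_mk] at this; omega
      rw [dif_pos hm, h1, neg_zero, zero_mul]
    · have h1 : Mup S m j = 0 := by
        rw [Mup_ndcol S (by omega)]
        exact if_neg fun hEq => by have := congrArg Fin.val hEq; omega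
      rw [dif_neg hm, h1, mul_zero]
  · -- i < d, d ≤ j
    rw [Finset.sum_eq_single_of_mem j (Finset.mem_univ _)]
    · have hjd : (j:ℕ) - d < 2*d := by have := j.isLt; omega
      have e1 : Mup S j j = 1 := by rw [Mup_ndrow S hj, if_pos rfl]
      have e2 : Mup S (⟨(j:ℕ) - d, hjd⟩ : Fin (2*d)) i = Jmat d i j := by
        rw [Mup_ndcol S (show ¬ d ≤ (i:ℕ) by omega), Jmat_eval]
        by_cases hc : (j:ℕ) = (i:ℕ) + d
        · rw [if_pos (Fin.val_injective
            (show ((⟨(j:ℕ) - d, hjd⟩ : Fin (2*d)) : ℕ) = (i:ℕ) by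
              simp only [Fin.val_mk]; omega)), if_pos ⟨hi, hc⟩]
        · have hne : (⟨(j:ℕ) - d, hjd⟩ : Fin (2*d)) ≠ i := fun hEq => by
            have := congrArg Fin.val hEq; simp only [Fin.val_mk] at this; omega
          rw [if_neg hne, if_neg (show ¬ ((i:ℕ) < d ∧ (j:ℕ) = (i:ℕ) + d) from
            fun hq => hc hq.2), if_neg (show ¬ ((j:ℕ) < d ∧ (i:ℕ) = (j:ℕ) + d) by omega)]
      rw [dif_neg hj, e1, e2, mul_one]
    · intro m _ hm
      by_cases hm' : (m:ℕ) < d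
      · have h1 : Mup S (⟨(m:ℕ) + d, by have := m.isLt; omega⟩ : Fin (2*d)) i = 0 := by
          rw [Mup_ndcol S (show ¬ d ≤ (i:ℕ) by omega)]
          exact if_neg fun hEq => by
            have := congrArg Fin.val hEq; simp only [Fin.val_mk] at this; omega
        rw [dif_pos hm', h1, neg_zero, zero_mul]
      · have h1 : Mup S m j = 0 := by rw [Mup_ndrow S hm']; exact if_neg hm
        rw [dif_neg hm', h1, mul_zero]
  · -- d ≤ i, j < d
    have hi2 : (i:ℕ) - d < 2*d := by have := i.isLt; omega
    rw [Finset.sum_eq_single_of_mem (⟨(i:ℕ) - d, hi2⟩ : Fin (2*d)) (Finset.mem_univ _)]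
    · have ha : ((⟨(i:ℕ) - d, hi2⟩ : Fin (2*d)) : ℕ) < d := by
        simp only [Fin.val_mk]; have := i.isLt; omega
      rw [dif_pos ha]
      have hmk : (⟨((⟨(i:ℕ) - d, hi2⟩ : Fin (2*d)) : ℕ) + d,
          by have := Fin.isLt (⟨(i:ℕ) - d, hi2⟩ : Fin (2*d)); omega⟩ : Fin (2*d)) = i :=
        Fin.val_injective (show ((⟨(i:ℕ) - d, hi2⟩ : Fin (2*d)) : ℕ) + d = (i:ℕ) by
          simp only [Fin.val_mk]; omega)
      rw [hmk]
      have e1 : Mup S i i = 1 := by rw [Mup_ndrow S hi, if_pos rfl]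
      have e2 : Mup S (⟨(i:ℕ) - d, hi2⟩ : Fin (2*d)) j
          = if (i:ℕ) = (j:ℕ) + d then 1 else 0 := by
        rw [Mup_ndcol S (show ¬ d ≤ (j:ℕ) by omega)]
        by_cases hc : (i:ℕ) = (j:ℕ) + d
        · rw [if_pos (Fin.val_injective
            (show ((⟨(i:ℕ) - d, hi2⟩ : Fin (2*d)) : ℕ) = (j:ℕ) by
              simp only [Fin.val_mk]; omega)), if_pos hc]
        · have hne : (⟨(i:ℕ) - d, hi2⟩ : Fin (2*d)) ≠ j := fun hEq => by
            have := congrArg Fin.val hEq; simp only [Fin.val_mk] at this; omega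
          rw [if_neg hne, if_neg hc]
      rw [e1, e2, Jmat_eval,
        if_neg (show ¬ ((i:ℕ) < d ∧ (j:ℕ) = (i:ℕ) + d) by omega)]
      by_cases hc : (i:ℕ) = (j:ℕ) + d
      · rw [if_pos hc, if_pos ⟨hj, hc⟩]; ring
      · rw [if_neg hc, if_neg fun h => hc h.2]; ring
    · intro m _ hm
      by_cases hm' : (m:ℕ) < d
      · have h1 : Mup S (⟨(m:ℕ) + d, by have := m.isLt; omega⟩ : Fin (2*d)) i = 0 := by
          rw [Mup_ndrow S (show ¬ ((⟨(m:ℕ) + d, by have := m.isLt; omega⟩ :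
            Fin (2*d)) : ℕ) < d by simp only [Fin.val_mk]; omega)]
          exact if_neg fun hEq => hm (Fin.val_injective
            (show (m:ℕ) = (i:ℕ) - d by
              have := congrArg Fin.val hEq; simp only [Fin.val_mk] at this; omega))
        rw [dif_pos hm', h1, neg_zero, zero_mul]
      · have h1 : Mup S m j = 0 := by
          rw [Mup_ndcol S (show ¬ d ≤ (j:ℕ) by omega)]
          exact if_neg fun hEq => by have := congrArg Fin.val hEq; omega
        rw [dif_neg hm', h1, mul_zero]
  · -- d ≤ i, d ≤ j : two surviving terms cancel by symmetry of S
    have hi2 : (i:ℕ) - d < 2*d := by have := i.isLt; omega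
    have hd1 : (i:ℕ) - d < d := by have := i.isLt; omega
    have hd2 : (j:ℕ) - d < d := by have := j.isLt; omega
    have hane : (⟨(i:ℕ) - d, hi2⟩ : Fin (2*d)) ≠ j := fun hEq => by
      have := congrArg Fin.val hEq; simp only [Fin.val_mk] at this; omega
    rw [Finset.sum_eq_add_of_mem (⟨(i:ℕ) - d, hi2⟩ : Fin (2*d)) j (Finset.mem_univ _)
      (Finset.mem_univ _) hane]
    · have ha : ((⟨(i:ℕ) - d, hi2⟩ : Fin (2*d)) : ℕ) < d := by
        simp only [Fin.val_mk]; have := i.isLt; omega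
      rw [dif_pos ha, dif_neg hj]
      have hmk : (⟨((⟨(i:ℕ) - d, hi2⟩ : Fin (2*d)) : ℕ) + d,
          by have := Fin.isLt (⟨(i:ℕ) - d, hi2⟩ : Fin (2*d)); omega⟩ : Fin (2*d)) = i :=
        Fin.val_injective (show ((⟨(i:ℕ) - d, hi2⟩ : Fin (2*d)) : ℕ) + d = (i:ℕ) by
          simp only [Fin.val_mk]; omega)
      rw [hmk]
      have e1 : Mup S i i = 1 := by rw [Mup_ndrow S hi, if_pos rfl]
      have e3 : Mup S j j = 1 := by rw [Mup_ndrow S hj, if_pos rfl]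
      have e2 : Mup S (⟨(i:ℕ) - d, hi2⟩ : Fin (2*d)) j
          = S ⟨(i:ℕ) - d, hd1⟩ ⟨(j:ℕ) - d, hd2⟩ := by
        rw [Mup_block S ha (by omega)]
      have hjd : (j:ℕ) - d < 2*d := by have := j.isLt; omega
      have e4 : Mup S (⟨(j:ℕ) - d, hjd⟩ : Fin (2*d)) i
          = S ⟨(j:ℕ) - d, hd2⟩ ⟨(i:ℕ) - d, hd1⟩ := by
        rw [Mup_block S (show ((⟨(j:ℕ) - d, hjd⟩ : Fin (2*d)) : ℕ) < d by
          simp only [Fin.val_mk]; omega) (by omega)]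
      rw [e1, e2, e3, e4, Jmat_zero (by omega) (by omega),
        hS ⟨(j:ℕ) - d, hd2⟩ ⟨(i:ℕ) - d, hd1⟩]
      ring
    · intro m _ hm
      by_cases hm' : (m:ℕ) < d
      · have h1 : Mup S (⟨(m:ℕ) + d, by have := m.isLt; omega⟩ : Fin (2*d)) i = 0 := by
          rw [Mup_ndrow S (show ¬ ((⟨(m:ℕ) + d, by have := m.isLt; omega⟩ :
            Fin (2*d)) : ℕ) < d by simp only [Fin.val_mk]; omega)]
          exact if_neg fun hEq => hm.1 (Fin.val_injective
            (show (m:ℕ) = (i:ℕ) - d by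
              have := congrArg Fin.val hEq; simp only [Fin.val_mk] at this; omega))
        rw [dif_pos hm', h1, neg_zero, zero_mul]
      · have h1 : Mup S m j = 0 := by rw [Mup_ndrow S hm']; exact if_neg hm.2
        rw [dif_neg hm', h1, mul_zero]

lemma Mlow_symp {d : ℕ} (S : Matrix (Fin d) (Fin d) ℝ) (hS : ∀ i j, S i j = S j i) :
    (Mlow S)ᵀ * Jmat d * Mlow S = Jmat d := by
  ext i j
  rw [prod_step]
  by_cases hi : (i:ℕ) < d <;> by_cases hj : (j:ℕ) < d
  · -- i < d, j < d : two surviving terms cancel by symmetry of S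
    have hid2 : (i:ℕ) + d < 2*d := by have := i.isLt; omega
    have hane : j ≠ (⟨(i:ℕ) + d, hid2⟩ : Fin (2*d)) := fun hEq => by
      have := congrArg Fin.val hEq; simp only [Fin.val_mk] at this; omega
    rw [Finset.sum_eq_add_of_mem j (⟨(i:ℕ) + d, hid2⟩ : Fin (2*d)) (Finset.mem_univ _)
      (Finset.mem_univ _) hane]
    · have hc : ¬ ((⟨(i:ℕ) + d, hid2⟩ : Fin (2*d)) : ℕ) < d := by
        simp only [Fin.val_mk]; omega
      rw [dif_pos hj, dif_neg hc]
      have hmk : (⟨((⟨(i:ℕ) + d, hid2⟩ : Fin (2*d)) : ℕ) - d,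
          by have := Fin.isLt (⟨(i:ℕ) + d, hid2⟩ : Fin (2*d)); omega⟩ : Fin (2*d)) = i :=
        Fin.val_injective (show ((⟨(i:ℕ) + d, hid2⟩ : Fin (2*d)) : ℕ) - d = (i:ℕ) by
          simp only [Fin.val_mk]; omega)
      rw [hmk]
      have e1 : Mlow S j j = 1 := by rw [Mlow_nrow S hj, if_pos rfl]
      have e3 : Mlow S i i = 1 := by rw [Mlow_nrow S hi, if_pos rfl]
      have hjd2 : (j:ℕ) + d < 2*d := by have := j.isLt; omega
      have e2 : Mlow S (⟨(j:ℕ) + d, hjd2⟩ : Fin (2*d)) i = S ⟨(j:ℕ), hj⟩ ⟨(i:ℕ), hi⟩ := by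
        rw [Mlow_block S (show d ≤ ((⟨(j:ℕ) + d, hjd2⟩ : Fin (2*d)) : ℕ) by
          simp only [Fin.val_mk]; omega) hi]
        exact congrArg₂ S (Fin.ext (by simp only [Fin.val_mk]; omega)) rfl
      have e4 : Mlow S (⟨(i:ℕ) + d, hid2⟩ : Fin (2*d)) j = S ⟨(i:ℕ), hi⟩ ⟨(j:ℕ), hj⟩ := by
        rw [Mlow_block S (show d ≤ ((⟨(i:ℕ) + d, hid2⟩ : Fin (2*d)) : ℕ) by
          simp only [Fin.val_mk]; omega) hj]
        exact congrArg₂ S (Fin.ext (by simp only [Fin.val_mk]; omega)) rfl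
      rw [e1, e2, e3, e4, Jmat_zero (by omega) (by omega), hS ⟨(i:ℕ), hi⟩ ⟨(j:ℕ), hj⟩]
      ring
    · intro m _ hm
      by_cases hm' : (m:ℕ) < d
      · have h1 : Mlow S m j = 0 := by rw [Mlow_nrow S hm']; exact if_neg hm.1
        rw [dif_pos hm', h1, mul_zero]
      · have hmd : (m:ℕ) - d < 2*d := by have := m.isLt; omega
        have h1 : Mlow S (⟨(m:ℕ) - d, by have := m.isLt; omega⟩ : Fin (2*d)) i = 0 := by
          rw [Mlow_nrow S (show ((⟨(m:ℕ) - d, by have := m.isLt; omega⟩ :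
            Fin (2*d)) : ℕ) < d by simp only [Fin.val_mk]; have := m.isLt; omega)]
          exact if_neg fun hEq => hm.2 (Fin.val_injective
            (show (m:ℕ) = (i:ℕ) + d by
              have := congrArg Fin.val hEq; simp only [Fin.val_mk] at this; omega))
        rw [dif_neg hm', h1, zero_mul]
  · -- i < d, d ≤ j
    have hid2 : (i:ℕ) + d < 2*d := by have := i.isLt; omega
    rw [Finset.sum_eq_single_of_mem (⟨(i:ℕ) + d, hid2⟩ : Fin (2*d)) (Finset.mem_univ _)]
    · have hc : ¬ ((⟨(i:ℕ) + d, hid2⟩ : Fin (2*d)) : ℕ) < d := by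
        simp only [Fin.val_mk]; omega
      rw [dif_neg hc]
      have hmk : (⟨((⟨(i:ℕ) + d, hid2⟩ : Fin (2*d)) : ℕ) - d,
          by have := Fin.isLt (⟨(i:ℕ) + d, hid2⟩ : Fin (2*d)); omega⟩ : Fin (2*d)) = i :=
        Fin.val_injective (show ((⟨(i:ℕ) + d, hid2⟩ : Fin (2*d)) : ℕ) - d = (i:ℕ) by
          simp only [Fin.val_mk]; omega)
      rw [hmk]
      have e1 : Mlow S i i = 1 := by rw [Mlow_nrow S hi, if_pos rfl]
      have e2 : Mlow S (⟨(i:ℕ) + d, hid2⟩ : Fin (2*d)) j = Jmat d i j := by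
        rw [Mlow_ndcol S (show d ≤ (j:ℕ) by omega), Jmat_eval]
        by_cases hc2 : (j:ℕ) = (i:ℕ) + d
        · rw [if_pos (Fin.val_injective
            (show ((⟨(i:ℕ) + d, hid2⟩ : Fin (2*d)) : ℕ) = (j:ℕ) by
              simp only [Fin.val_mk]; omega)), if_pos ⟨hi, hc2⟩]
        · have hne : (⟨(i:ℕ) + d, hid2⟩ : Fin (2*d)) ≠ j := fun hEq => by
            have := congrArg Fin.val hEq; simp only [Fin.val_mk] at this; omega
          rw [if_neg hne, if_neg (by omega), if_neg (by omega)]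
      rw [e1, e2, one_mul]
    · intro m _ hm
      by_cases hm' : (m:ℕ) < d
      · have h1 : Mlow S m j = 0 := by
          rw [Mlow_nrow S hm']
          exact if_neg fun hEq => by have := congrArg Fin.val hEq; omega
        rw [dif_pos hm', h1, mul_zero]
      · have h1 : Mlow S (⟨(m:ℕ) - d, by have := m.isLt; omega⟩ : Fin (2*d)) i = 0 := by
          rw [Mlow_nrow S (show ((⟨(m:ℕ) - d, by have := m.isLt; omega⟩ :
            Fin (2*d)) : ℕ) < d by simp only [Fin.val_mk]; have := m.isLt; omega)]
          exact if_neg fun hEq => hm (Fin.val_injective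
            (show (m:ℕ) = (i:ℕ) + d by
              have := congrArg Fin.val hEq; simp only [Fin.val_mk] at this; omega))
        rw [dif_neg hm', h1, zero_mul]
  · -- d ≤ i, j < d
    rw [Finset.sum_eq_single_of_mem j (Finset.mem_univ _)]
    · have hjd2 : (j:ℕ) + d < 2*d := by have := j.isLt; omega
      have e1 : Mlow S j j = 1 := by rw [Mlow_nrow S hj, if_pos rfl]
      have e2 : Mlow S (⟨(j:ℕ) + d, hjd2⟩ : Fin (2*d)) i
          = if (i:ℕ) = (j:ℕ) + d then 1 else 0 := by
        rw [Mlow_ndcol S (show d ≤ (i:ℕ) by omega)]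
        by_cases hc : (i:ℕ) = (j:ℕ) + d
        · rw [if_pos (Fin.val_injective
            (show ((⟨(j:ℕ) + d, hjd2⟩ : Fin (2*d)) : ℕ) = (i:ℕ) by
              simp only [Fin.val_mk]; omega)), if_pos hc]
        · have hne : (⟨(j:ℕ) + d, hjd2⟩ : Fin (2*d)) ≠ i := fun hEq => by
            have := congrArg Fin.val hEq; simp only [Fin.val_mk] at this; omega
          rw [if_neg hne, if_neg hc]
      rw [dif_pos hj, e1, e2, Jmat_eval,
        if_neg (show ¬ ((i:ℕ) < d ∧ (j:ℕ) = (i:ℕ) + d) by omega)]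
      by_cases hc : (i:ℕ) = (j:ℕ) + d
      · rw [if_pos hc, if_pos ⟨hj, hc⟩]; ring
      · rw [if_neg hc, if_neg fun h => hc h.2]; ring
    · intro m _ hm
      by_cases hm' : (m:ℕ) < d
      · have h1 : Mlow S m j = 0 := by rw [Mlow_nrow S hm']; exact if_neg hm
        rw [dif_pos hm', h1, mul_zero]
      · have h1 : Mlow S (⟨(m:ℕ) - d, by have := m.isLt; omega⟩ : Fin (2*d)) i = 0 := by
          rw [Mlow_ndcol S (show d ≤ (i:ℕ) by omega)]
          exact if_neg fun hEq => by
            have := congrArg Fin.val hEq; simp only [Fin.val_mk] at this; omega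
        rw [dif_neg hm', h1, zero_mul]
  · -- d ≤ i, d ≤ j : everything vanishes
    rw [Finset.sum_eq_zero, Jmat_zero (by omega) (by omega)]
    intro m _
    by_cases hm' : (m:ℕ) < d
    · have h1 : Mlow S m j = 0 := by
        rw [Mlow_nrow S hm']
        exact if_neg fun hEq => by have := congrArg Fin.val hEq; omega
      rw [dif_pos hm', h1, mul_zero]
    · have h1 : Mlow S (⟨(m:ℕ) - d, by have := m.isLt; omega⟩ : Fin (2*d)) i = 0 := by
        rw [Mlow_ndcol S (show d ≤ (i:ℕ) by omega)]
        exact if_neg fun hEq => by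
          have := congrArg Fin.val hEq; simp only [Fin.val_mk] at this; omega
      rw [dif_neg hm', h1, zero_mul]

/-! ### The Jacobians of the gradient modules -/

lemma jac_Gup {d l : ℕ} {σ : ℝ → ℝ} (hσ : Differentiable ℝ σ)
    (K : Matrix (Fin l) (Fin d) ℝ) (a b : Fin l → ℝ) (x : Fin (2*d) → ℝ) :
    jac (Gup σ K a b) x = Mup (Smat σ K a b (fun s => x (eup d s))) := by
  funext i j
  show pd (fun y => Gup σ K a b y i) x j = _
  by_cases hi : (i:ℕ) < d
  · have hfun : (fun y : Fin (2*d) → ℝ => Gup σ K a b y i)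
        = fun y => y i + gradMod σ K a b (fun s => y (eup d s)) ⟨(i:ℕ), hi⟩ := by
      funext y; simp only [Gup, dif_pos hi]; rfl
    rw [hfun]
    have hF : HasFDerivAt
        (fun y : Fin (2*d) → ℝ => y i + gradMod σ K a b (fun s => y (eup d s)) ⟨(i:ℕ), hi⟩)
        ((ContinuousLinearMap.proj (R := ℝ) (φ := fun _ : Fin (2*d) => ℝ) i)
          + Lmap σ K a b (eup d) ⟨(i:ℕ), hi⟩ x) x :=
      ((ContinuousLinearMap.proj (R := ℝ) (φ := fun _ : Fin (2*d) => ℝ) i).hasFDerivAt).add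
        (hasFDerivAt_gradMod hσ K a b (eup d) ⟨(i:ℕ), hi⟩ x)
    unfold pd
    rw [hF.fderiv, ContinuousLinearMap.add_apply, Lmap_single,
      ContinuousLinearMap.proj_apply, Pi.single_apply]
    by_cases hj : d ≤ (j:ℕ)
    · have hsum : ∑ r, K r ⟨(i:ℕ), hi⟩ * a r
            * deriv σ ((∑ s, K r s * x (eup d s)) + b r)
            * (∑ s, K r s * (Pi.single j (1:ℝ) : Fin (2*d) → ℝ) (eup d s))
          = Smat σ K a b (fun s => x (eup d s)) ⟨(i:ℕ), hi⟩
              ⟨(j:ℕ) - d, by have := j.isLt; omega⟩ := by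
        refine Finset.sum_congr rfl fun r _ => ?_
        rw [sum_single_up K r j, dif_pos hj]
      rw [hsum]
      unfold Mup
      rw [dif_pos ⟨hi, hj⟩]
    · have hsum : ∑ r, K r ⟨(i:ℕ), hi⟩ * a r
            * deriv σ ((∑ s, K r s * x (eup d s)) + b r)
            * (∑ s, K r s * (Pi.single j (1:ℝ) : Fin (2*d) → ℝ) (eup d s)) = 0 := by
        refine Finset.sum_eq_zero fun r _ => ?_
        rw [sum_single_up K r j, dif_neg hj, mul_zero]
      rw [hsum]
      unfold Mup
      rw [dif_neg fun hc => hj hc.2, add_zero]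
  · have hfun : (fun y : Fin (2*d) → ℝ => Gup σ K a b y i) = fun y => y i := by
      funext y; simp only [Gup, dif_neg hi]
    rw [hfun]
    unfold pd
    have hF : HasFDerivAt (fun y : Fin (2*d) → ℝ => y i)
        (ContinuousLinearMap.proj (R := ℝ) (φ := fun _ : Fin (2*d) => ℝ) i) x :=
      (ContinuousLinearMap.proj (R := ℝ) (φ := fun _ : Fin (2*d) => ℝ) i).hasFDerivAt
    rw [hF.fderiv, ContinuousLinearMap.proj_apply, Pi.single_apply]
    unfold Mup
    rw [dif_neg fun hc => hi hc.1, add_zero]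

lemma jac_Glow {d l : ℕ} {σ : ℝ → ℝ} (hσ : Differentiable ℝ σ)
    (K : Matrix (Fin l) (Fin d) ℝ) (a b : Fin l → ℝ) (x : Fin (2*d) → ℝ) :
    jac (Glow σ K a b) x = Mlow (Smat σ K a b (fun s => x (elow d s))) := by
  funext i j
  show pd (fun y => Glow σ K a b y i) x j = _
  by_cases hi : (i:ℕ) < d
  · have hfun : (fun y : Fin (2*d) → ℝ => Glow σ K a b y i) = fun y => y i := by
      funext y; simp only [Glow, dif_pos hi]
    rw [hfun]
    unfold pd
    have hF : HasFDerivAt (fun y : Fin (2*d) → ℝ => y i)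
        (ContinuousLinearMap.proj (R := ℝ) (φ := fun _ : Fin (2*d) => ℝ) i) x :=
      (ContinuousLinearMap.proj (R := ℝ) (φ := fun _ : Fin (2*d) => ℝ) i).hasFDerivAt
    rw [hF.fderiv, ContinuousLinearMap.proj_apply, Pi.single_apply]
    unfold Mlow
    rw [dif_neg fun hc => by omega, add_zero]
  · have hig : (i:ℕ) - d < d := by have := i.isLt; omega
    have hfun : (fun y : Fin (2*d) → ℝ => Glow σ K a b y i)
        = fun y => y i + gradMod σ K a b (fun s => y (elow d s)) ⟨(i:ℕ) - d, hig⟩ := by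
      funext y; simp only [Glow, dif_neg hi]; rfl
    rw [hfun]
    have hF : HasFDerivAt
        (fun y : Fin (2*d) → ℝ =>
          y i + gradMod σ K a b (fun s => y (elow d s)) ⟨(i:ℕ) - d, hig⟩)
        ((ContinuousLinearMap.proj (R := ℝ) (φ := fun _ : Fin (2*d) => ℝ) i)
          + Lmap σ K a b (elow d) ⟨(i:ℕ) - d, hig⟩ x) x :=
      ((ContinuousLinearMap.proj (R := ℝ) (φ := fun _ : Fin (2*d) => ℝ) i).hasFDerivAt).add
        (hasFDerivAt_gradMod hσ K a b (elow d) ⟨(i:ℕ) - d, hig⟩ x)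
    unfold pd
    rw [hF.fderiv, ContinuousLinearMap.add_apply, Lmap_single,
      ContinuousLinearMap.proj_apply, Pi.single_apply]
    by_cases hj : (j:ℕ) < d
    · have hsum : ∑ r, K r ⟨(i:ℕ) - d, hig⟩ * a r
            * deriv σ ((∑ s, K r s * x (elow d s)) + b r)
            * (∑ s, K r s * (Pi.single j (1:ℝ) : Fin (2*d) → ℝ) (elow d s))
          = Smat σ K a b (fun s => x (elow d s)) ⟨(i:ℕ) - d, hig⟩ ⟨(j:ℕ), hj⟩ := by
        refine Finset.sum_congr rfl fun r _ => ?_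
        rw [sum_single_low K r j, dif_pos hj]
      rw [hsum]
      unfold Mlow
      rw [dif_pos ⟨by omega, hj⟩]
    · have hsum : ∑ r, K r ⟨(i:ℕ) - d, hig⟩ * a r
            * deriv σ ((∑ s, K r s * x (elow d s)) + b r)
            * (∑ s, K r s * (Pi.single j (1:ℝ) : Fin (2*d) → ℝ) (elow d s)) = 0 := by
        refine Finset.sum_eq_zero fun r _ => ?_
        rw [sum_single_low K r j, dif_neg hj, mul_zero]
      rw [hsum]
      unfold Mlow
      rw [dif_neg fun hc => hj hc.2, add_zero]

/-- the gradient modules `G_up` and `G_low` are symplectic maps: their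
Jacobian matrices `M` satisfy `Mᵀ J M = J` at every point. -/
theorem statement_11 {d l : ℕ} (hd : 0 < d) (hl : 0 < l)
    (σ : ℝ → ℝ) (hσ : Differentiable ℝ σ)
    (K : Matrix (Fin l) (Fin d) ℝ) (a b : Fin l → ℝ) :
    (∀ x : Fin (2*d) → ℝ,
      (jac (Gup σ K a b) x)ᵀ * Jmat d * jac (Gup σ K a b) x = Jmat d) ∧
    (∀ x : Fin (2*d) → ℝ,
      (jac (Glow σ K a b) x)ᵀ * Jmat d * jac (Glow σ K a b) x = Jmat d) := by
  refine ⟨fun x => ?_, fun x => ?_⟩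
  · rw [jac_Gup hσ K a b x]
    exact Mup_symp _ fun i j => Smat_symm σ K a b _ i j
  · rw [jac_Glow hσ K a b x]
    exact Mlow_symp _ fun i j => Smat_symm σ K a b _ i j
end

section
/- Let (p, q, c) : ℝ → ℝ³ be a solution of the extended pendulum system ṗ = −sin q, q̇ = p + c, ċ = 0. Then (u, v, r) = (p, q, p² + q² + c) is a solution of the Poisson system (u̇, v̇, ṙ)ᵀ = B(u, v, r) ∇K(u, v, r), where B(u, v, r) = ((0, −1, −2v), (1, 0, 2u), (2v, −2u, 0)) and K(u, v, r) = ½u² − cos v + ur − u³ − uv², whose right-hand side equals B(u,v,r) applied to the gradient (u − 3u² − v² + r, sin v − 2uv, u)ᵀ. -/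
/-- The structure matrix of the extended pendulum system, in coordinates
`(u, v, r) = (y 0, y 1, y 2)`. -/
def Bpend : (Fin 3 → ℝ) → Matrix (Fin 3) (Fin 3) ℝ := fun y =>
  !![0, -1, -2 * y 1;
     1, 0, 2 * y 0;
     2 * y 1, -2 * y 0, 0]

/-- The Hamiltonian `K(u, v, r) = ½u² - cos v + ur - u³ - uv²` of the transformed extended
pendulum system. -/
noncomputable def Kpend : (Fin 3 → ℝ) → ℝ := fun w =>
  (1/2) * (w 0)^2 - Real.cos (w 1) + w 0 * w 2 - (w 0)^3 - w 0 * (w 1)^2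

open ContinuousLinearMap in
theorem pd_eq_sum_smul_proj {n : ℕ} {F : (Fin n → ℝ) → ℝ} {y g : Fin n → ℝ}
    (hF : HasFDerivAt F (∑ i, g i • proj (R := ℝ) (φ := fun _ : Fin n => ℝ) i) y) :
    (fun i => pd F y i) = g := by
  funext i
  simp [pd, hF.fderiv, Pi.single_apply]

open ContinuousLinearMap in
theorem hasFDerivAt_Kpend (w : Fin 3 → ℝ) :
    HasFDerivAt Kpend
      (∑ i, ![w 0 - 3 * (w 0)^2 - (w 1)^2 + w 2, Real.sin (w 1) - 2 * w 0 * w 1, w 0] i •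
        proj (R := ℝ) (φ := fun _ : Fin 3 => ℝ) i) w := by
  have h0 := hasFDerivAt_apply (𝕜 := ℝ) (F' := fun _ : Fin 3 => ℝ) 0 w
  have h1 := hasFDerivAt_apply (𝕜 := ℝ) (F' := fun _ : Fin 3 => ℝ) 1 w
  have h2 := hasFDerivAt_apply (𝕜 := ℝ) (F' := fun _ : Fin 3 => ℝ) 2 w
  have hK := (((((h0.pow 2).const_mul (1/2 : ℝ)).sub
    ((Real.hasDerivAt_cos (w 1)).comp_hasFDerivAt w h1)).add (h0.mul h2)).sub (h0.pow 3)).sub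
    (h0.mul (h1.pow 2))
  refine hK.congr_fderiv ?_
  ext v
  simp only [Fin.sum_univ_three, add_apply, sub_apply, smul_apply, proj_apply, smul_eq_mul,
    Matrix.cons_val_zero, Matrix.cons_val_one, Matrix.cons_val, nsmul_eq_mul, Nat.add_one_sub_one]
  ring

theorem Bpend_mulVec (w : Fin 3 → ℝ) (a b c : ℝ) :
    (Bpend w).mulVec ![a, b, c] = ![-b - 2 * w 1 * c, a + 2 * w 0 * c, 2 * w 1 * a - 2 * w 0 * b] := by
  ext i
  fin_cases i <;>
    simp only [Bpend, Matrix.mulVec, dotProduct, Fin.sum_univ_three, Matrix.of_apply, Matrix.cons_val',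
      Matrix.cons_val_fin_one, Matrix.cons_val_zero, Matrix.cons_val_one, Matrix.cons_val,
      Fin.zero_eta, Fin.mk_one, Fin.reduceFinMk] <;>
    ring

/-- if `(p, q, c)` solves the extended pendulum system `ṗ = -sin q`,
`q̇ = p + c`, `ċ = 0`, then `(u, v, r) = (p, q, p² + q² + c)` solves the Poisson system
`(u̇, v̇, ṙ)ᵀ = B(u,v,r) ∇K(u,v,r)`, whose right-hand side is `B(u,v,r)` applied to the
gradient `(u - 3u² - v² + r, sin v - 2uv, u)ᵀ`. -/
theorem statement_15 (p q c : ℝ → ℝ)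
    (hp : ∀ t, HasDerivAt p (-Real.sin (q t)) t)
    (hq : ∀ t, HasDerivAt q (p t + c t) t)
    (hc : ∀ t, HasDerivAt c 0 t) :
    let y : ℝ → (Fin 3 → ℝ) := fun t => ![p t, q t, (p t)^2 + (q t)^2 + c t]
    (∀ w : Fin 3 → ℝ, (fun i => pd Kpend w i) =
      ![w 0 - 3 * (w 0)^2 - (w 1)^2 + w 2, Real.sin (w 1) - 2 * w 0 * w 1, w 0]) ∧
    (∀ t, HasDerivAt y ((Bpend (y t)).mulVec (fun i => pd Kpend (y t) i)) t) := by
  intro y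
  have grad_K w := pd_eq_sum_smul_proj (hasFDerivAt_Kpend w)
  refine ⟨grad_K, fun t => ?_⟩
  rw [grad_K, Bpend_mulVec]
  refine hasDerivAt_pi.mpr fun i => ?_
  fin_cases i <;> simp only [y, Fin.zero_eta, Fin.mk_one, Fin.reduceFinMk, Matrix.cons_val]
  · exact (hp t).congr_deriv (by ring)
  · exact (hq t).congr_deriv (by ring)
  · exact (((hp t).pow 2).add ((hq t).pow 2)).add (hc t) |>.congr_deriv (by ring)
end

section
/- Fix Δx > 0 and a positive integer N. Define the 2N×2N matrix-valued function on ℝ^{2N} (coordinates (u₁,…,u_N, v₁,…,v_N)) by the block form B(u, v) = ((0, −D(u,v)), (D(u,v), 0)), where D(u,v) = diag(d₁,…,d_N) with d_k(u,v) = 1 + Δx²(u_k² + v_k²). Then B defines a Poisson bracket: it is pointwise skew-symmetric, and for all indices i, j, k ∈ {1,…,2N} it satisfies Σ_{l=1}^{2N} ( ∂b_ij/∂y_l b_lk + ∂b_jk/∂y_l b_li + ∂b_ki/∂y_l b_lj ) = 0 everywhere. -/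
/-- The Ablowitz–Ladik structure matrix on `ℝ^{2N}`, in coordinates
`(u₁,…,u_N, v₁,…,v_N)`: the block matrix `((0, -D), (D, 0))` with
`D = diag(d₁,…,d_N)`, `d_k = 1 + Δx²(u_k² + v_k²)`. -/
def BAL (dx : ℝ) (N : ℕ) : (Fin (2*N) → ℝ) → Matrix (Fin (2*N)) (Fin (2*N)) ℝ :=
  fun y i j =>
    if (i:ℕ) < N ∧ (j:ℕ) = (i:ℕ) + N then -(1 + dx^2 * ((y i)^2 + (y j)^2))
    else if (j:ℕ) < N ∧ (i:ℕ) = (j:ℕ) + N then 1 + dx^2 * ((y i)^2 + (y j)^2)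
    else 0

/-- Sign coefficient of the Ablowitz–Ladik structure matrix. -/
def eAL (N : ℕ) (i j : Fin (2*N)) : ℝ :=
  if (i:ℕ) < N ∧ (j:ℕ) = (i:ℕ) + N then -1
  else if (j:ℕ) < N ∧ (i:ℕ) = (j:ℕ) + N then 1
  else 0

lemma BAL_eq (dx : ℝ) (N : ℕ) (y : Fin (2*N) → ℝ) (i j : Fin (2*N)) :
    BAL dx N y i j = eAL N i j * (1 + dx^2 * ((y i)^2 + (y j)^2)) := by
  unfold BAL eAL
  split_ifs <;> ring

lemma eAL_antisymm (N : ℕ) (i j : Fin (2*N)) : eAL N j i = - eAL N i j := by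
  unfold eAL
  split_ifs <;> try ring
  all_goals omega

lemma eAL_cond {N : ℕ} {i j : Fin (2*N)} (h : eAL N i j ≠ 0) :
    ((i:ℕ) < N ∧ (j:ℕ) = (i:ℕ) + N) ∨ ((j:ℕ) < N ∧ (i:ℕ) = (j:ℕ) + N) := by
  unfold eAL at h
  split_ifs at h with h1 h2
  · exact Or.inl h1
  · exact Or.inr h2
  · exact absurd rfl h

lemma eAL_key {N : ℕ} {i j k : Fin (2*N)} (h1 : eAL N i j ≠ 0) (h2 : eAL N i k ≠ 0) :
    j = k := by
  have c1 := eAL_cond h1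
  have c2 := eAL_cond h2
  have : (j:ℕ) = (k:ℕ) := by rcases c1 with ⟨a,b⟩|⟨a,b⟩ <;> rcases c2 with ⟨c,d⟩|⟨c,d⟩ <;> omega
  exact Fin.ext this

lemma pd_BAL (dx : ℝ) (N : ℕ) (i j : Fin (2*N)) (y : Fin (2*N) → ℝ) (l : Fin (2*N)) :
    pd (fun x => BAL dx N x i j) y l
      = eAL N i j * dx^2 * (2 * y i * (if i = l then 1 else 0)
          + 2 * y j * (if j = l then 1 else 0)) := by
  have hfun : (fun x => BAL dx N x i j)
      = fun x : Fin (2*N) → ℝ => eAL N i j * (1 + dx^2 * (x i * x i + x j * x j)) := by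
    funext x
    rw [BAL_eq]
    ring
  have hi := hasFDerivAt_apply (𝕜 := ℝ) i y
  have hj := hasFDerivAt_apply (𝕜 := ℝ) j y
  have hsq : HasFDerivAt (fun x : Fin (2*N) → ℝ => x i * x i + x j * x j)
      ((y i • ContinuousLinearMap.proj i + y i • ContinuousLinearMap.proj i)
        + (y j • ContinuousLinearMap.proj j + y j • ContinuousLinearMap.proj j)) y :=
    (hi.mul hi).add (hj.mul hj)
  have H := ((hsq.const_mul (dx^2)).const_add 1).const_mul (eAL N i j)
  rw [pd, hfun, H.fderiv]
  simp [Pi.single_apply]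
  split_ifs <;> ring

lemma sum_pd (dx : ℝ) (N : ℕ) (y : Fin (2*N) → ℝ) (i j k : Fin (2*N)) :
    ∑ l, pd (fun x => BAL dx N x i j) y l * BAL dx N y l k
      = eAL N i j * dx^2 * (2 * y i * BAL dx N y i k + 2 * y j * BAL dx N y j k) := by
  have key : ∀ l : Fin (2*N), pd (fun x => BAL dx N x i j) y l * BAL dx N y l k
      = (if i = l then eAL N i j * dx^2 * (2 * y i) * BAL dx N y l k else 0)
        + (if j = l then eAL N i j * dx^2 * (2 * y j) * BAL dx N y l k else 0) := by
    intro l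
    rw [pd_BAL]
    split_ifs <;> ring
  rw [Finset.sum_congr rfl fun l _ => key l, Finset.sum_add_distrib,
    Finset.sum_ite_eq, Finset.sum_ite_eq]
  simp
  ring

/-- the Ablowitz–Ladik structure matrix `B(u,v) = ((0, -D(u,v)), (D(u,v), 0))`,
`D = diag(1 + Δx²(u_k² + v_k²))`, defines a Poisson bracket on `ℝ^{2N}`: it is pointwise
skew-symmetric and satisfies the differential Jacobi condition everywhere. -/
theorem statement_17 (dx : ℝ) (hdx : 0 < dx) (N : ℕ) (hN : 0 < N) :
    (∀ (y : Fin (2*N) → ℝ) (i j : Fin (2*N)), BAL dx N y i j = - BAL dx N y j i) ∧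
    (∀ (y : Fin (2*N) → ℝ) (i j k : Fin (2*N)),
      ∑ l, (pd (fun x => BAL dx N x i j) y l * BAL dx N y l k
          + pd (fun x => BAL dx N x j k) y l * BAL dx N y l i
          + pd (fun x => BAL dx N x k i) y l * BAL dx N y l j) = 0) := by
  constructor
  · intro y i j
    rw [BAL_eq, BAL_eq, eAL_antisymm]
    ring
  · intro y i j k
    rw [Finset.sum_congr rfl fun l _ => rfl]
    have hsplit : ∑ l, (pd (fun x => BAL dx N x i j) y l * BAL dx N y l k
          + pd (fun x => BAL dx N x j k) y l * BAL dx N y l i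
          + pd (fun x => BAL dx N x k i) y l * BAL dx N y l j)
        = (∑ l, pd (fun x => BAL dx N x i j) y l * BAL dx N y l k)
          + (∑ l, pd (fun x => BAL dx N x j k) y l * BAL dx N y l i)
          + (∑ l, pd (fun x => BAL dx N x k i) y l * BAL dx N y l j) := by
      rw [Finset.sum_add_distrib, Finset.sum_add_distrib]
    rw [hsplit, sum_pd, sum_pd, sum_pd]
    rw [BAL_eq, BAL_eq, BAL_eq, BAL_eq, BAL_eq, BAL_eq]
    rw [eAL_antisymm N i j, eAL_antisymm N j k, eAL_antisymm N k i] at *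
    -- now goal in terms of eAL N i j, eAL N j k, eAL N k i (and their negations)
    have h1 : eAL N i j * eAL N i k * ((y k)^2 - (y j)^2) = 0 := by
      rcases eq_or_ne (eAL N i j) 0 with h | h
      · rw [h]; ring
      rcases eq_or_ne (eAL N i k) 0 with h' | h'
      · rw [h']; ring
      have := eAL_key h h'
      subst this; ring
    have h2 : eAL N j i * eAL N j k * ((y k)^2 - (y i)^2) = 0 := by
      rcases eq_or_ne (eAL N j i) 0 with h | h
      · rw [h]; ring
      rcases eq_or_ne (eAL N j k) 0 with h' | h'
      · rw [h']; ring
      have := eAL_key h h'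
      subst this; ring
    have h3 : eAL N k i * eAL N k j * ((y i)^2 - (y j)^2) = 0 := by
      rcases eq_or_ne (eAL N k i) 0 with h | h
      · rw [h]; ring
      rcases eq_or_ne (eAL N k j) 0 with h' | h'
      · rw [h']; ring
      have := eAL_key h h'
      subst this; ring
    have ha1 : eAL N j i = - eAL N i j := eAL_antisymm N i j
    have ha2 : eAL N k j = - eAL N j k := eAL_antisymm N j k
    have ha3 : eAL N i k = - eAL N k i := eAL_antisymm N k i
    rw [ha3] at h1
    rw [ha1] at h2
    rw [ha2] at h3
    linear_combination (2 * dx^2 * dx^2 * y i) * h1 - (2 * dx^2 * dx^2 * y j) * h2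
      - (2 * dx^2 * dx^2 * y k) * h3
end
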